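/- arXiv:2008.05338 — 9 statements merged into one kernel-verified Lean document; each statement's English description precedes it below -/
import Mathlib

section
/- Suppose that T₀ ⟂ (C, X) | Z and B ⟂ (C, T₀, Z) | X. Then T ⟂ C | (X, Z); that is, the survival time T and the censoring time C are conditionally independent given the covariate vector (X, Z). -/
/-!
The survival time `T` is a measurable function of `(B, T₀)`, so it suffices to prove
`(B, T₀) ⟂ C | (X, Z)`. By the weak union rule of conditional independence, the first hypothesis
gives `T₀ ⟂ C | (X, Z)` and the second gives `B ⟂ C | (X, Z, T₀)`; the contraction rule combines
the two into `(B, T₀) ⟂ C | (X, Z)`.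
-/

open MeasureTheory ProbabilityTheory

namespace ProbabilityTheory

variable {Ω α β β' γ δ : Type*} {m M : MeasurableSpace Ω} {mΩ : MeasurableSpace Ω}
  {μ : Measure Ω} [IsFiniteMeasure μ]

theorem condExp_inter_ae_eq_mul_of_le (hmM : m ≤ M) (hM : M ≤ mΩ)
    {A B : Set Ω} (hAB : μ⟦A ∩ B | M⟧ =ᵐ[μ] μ⟦A | M⟧ * μ⟦B | M⟧)
    (hAm : AEStronglyMeasurable[m] (μ⟦A | M⟧) μ) :
    μ⟦A ∩ B | m⟧ =ᵐ[μ] μ⟦A | m⟧ * μ⟦B | m⟧ := by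
  have hA : μ⟦A | m⟧ =ᵐ[μ] μ⟦A | M⟧ := (condExp_condExp_of_le hmM hM).symm.trans
    (condExp_of_aestronglyMeasurable' (hmM.trans hM) hAm integrable_condExp)
  calc μ⟦A ∩ B | m⟧
      =ᵐ[μ] μ[μ⟦A ∩ B | M⟧ | m] := (condExp_condExp_of_le hmM hM).symm
    _ =ᵐ[μ] μ[μ⟦A | M⟧ * μ⟦B | M⟧ | m] := condExp_congr_ae hAB
    _ =ᵐ[μ] μ⟦A | M⟧ * μ[μ⟦B | M⟧ | m] :=
      condExp_mul_of_aestronglyMeasurable_left hAm (integrable_condExp.congr hAB) integrable_condExp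
    _ =ᵐ[μ] μ⟦A | m⟧ * μ⟦B | m⟧ := hA.symm.mul (condExp_condExp_of_le hmM hM)

theorem condExp_inter_ae_eq_indicator {A E : Set Ω}
    (hA : MeasurableSet A) (hE : MeasurableSet[m] E) :
    μ⟦A ∩ E | m⟧ =ᵐ[μ] E.indicator (μ⟦A | m⟧) := by
  rw [Set.inter_comm, ← Set.indicator_indicator]
  exact condExp_indicator ((integrable_const 1).indicator hA) hE

theorem condExp_inter_inter_ae_eq_mul {A B E : Set Ω}
    (hA : MeasurableSet A) (hB : MeasurableSet B) (hE : MeasurableSet[M] E)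
    (hAB : μ⟦A ∩ B | M⟧ =ᵐ[μ] μ⟦A | M⟧ * μ⟦B | M⟧) :
    μ⟦A ∩ (B ∩ E) | M⟧ =ᵐ[μ] μ⟦A | M⟧ * μ⟦B ∩ E | M⟧ := by
  rw [← Set.inter_assoc]
  filter_upwards [condExp_inter_ae_eq_indicator (hA.inter hB) hE,
    condExp_inter_ae_eq_indicator (μ := μ) hB hE, hAB] with ω hABE hBE hABω
  rw [hABE, Pi.mul_apply, hBE]
  by_cases hω : ω ∈ E <;> simp [hω, hABω]

variable [StandardBorelSpace Ω]

theorem condIndepFun_prodMk_left_of_forall_preimage [MeasurableSpace α] [MeasurableSpace β]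
    [MeasurableSpace γ] (hm : m ≤ mΩ) {U : Ω → α} {Y : Ω → β}
    {C : Ω → γ} (hU : Measurable U) (hY : Measurable Y) (hC : Measurable C)
    (h : ∀ s r t, MeasurableSet s → MeasurableSet r → MeasurableSet t →
      μ⟦U ⁻¹' s ∩ Y ⁻¹' r ∩ C ⁻¹' t | m⟧ =ᵐ[μ] μ⟦U ⁻¹' s ∩ Y ⁻¹' r | m⟧ * μ⟦C ⁻¹' t | m⟧) :
    CondIndepFun m hm (fun ω => (U ω, Y ω)) C μ := by
  rw [condIndepFun_iff_condIndep]
  have hUY := hU.prodMk hY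
  refine CondIndepSets.condIndep hUY.comap_le hC.comap_le
    (isPiSystem_prod.comap fun ω => (U ω, Y ω))
    (@MeasurableSpace.isPiSystem_measurableSet Ω (MeasurableSpace.comap C inferInstance))
    (by rw [← generateFrom_prod, MeasurableSpace.comap_generateFrom]; rfl)
    (@MeasurableSpace.generateFrom_measurableSet Ω (MeasurableSpace.comap C inferInstance)).symm ?_
  refine (condIndepSets_iff _ _ _ _ ?_ ?_ μ).2 ?_
  · rintro _ ⟨_, ⟨s, hs, r, hr, rfl⟩, rfl⟩
    exact hUY (hs.prod hr)
  · exact fun t ht => hC.comap_le t ht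
  rintro _ _ ⟨_, ⟨s, hs, r, hr, rfl⟩, rfl⟩ ⟨t, ht, rfl⟩
  exact h s r t hs hr ht

theorem condExp_preimage_ae_eq_of_condIndepFun [MeasurableSpace α] [StandardBorelSpace α]
    [Nonempty α] [MeasurableSpace β] [StandardBorelSpace β] [Nonempty β] [MeasurableSpace γ]
    {U : Ω → α} {V : Ω → β} {W : Ω → γ} (hU : Measurable U) (hV : Measurable V)
    (hW : Measurable W) (h : V ⟂ᵢ[W, hW; μ] U) {s : Set α} (hs : MeasurableSet s) :
    μ⟦U ⁻¹' s | MeasurableSpace.comap (fun ω => (W ω, V ω)) inferInstance⟧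
      =ᵐ[μ] μ⟦U ⁻¹' s | MeasurableSpace.comap W inferInstance⟧ := by
  have hker := ae_of_ae_map (hW.prodMk hV).aemeasurable
    ((condIndepFun_iff_condDistrib_prod_ae_eq_prodMkRight hU hV hW).1 h)
  filter_upwards [condDistrib_ae_eq_condExp (hW.prodMk hV) hU hs,
    condDistrib_ae_eq_condExp (μ := μ) hW hU hs, hker] with ω hcondWV hcondW hkerω
  rw [← hcondWV, ← hcondW, hkerω, Kernel.prodMkRight_apply]

theorem CondIndepFun.weak_union [MeasurableSpace α] [StandardBorelSpace α] [Nonempty α]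
    [MeasurableSpace β] [StandardBorelSpace β] [Nonempty β]
    [MeasurableSpace β'] [StandardBorelSpace β'] [Nonempty β'] [MeasurableSpace γ]
    {U : Ω → α} {V : Ω → β} {V' : Ω → β'} {W : Ω → γ} (hU : Measurable U) (hV : Measurable V)
    (hV' : Measurable V') (hW : Measurable W) (h : U ⟂ᵢ[W, hW; μ] (fun ω => (V ω, V' ω))) :
    U ⟂ᵢ[fun ω => (W ω, V' ω), hW.prodMk hV'; μ] V := by
  rw [condIndepFun_iff_condExp_inter_preimage_eq_mul hU hV]
  intro s t hs ht
  have hM := (hW.prodMk (hV.prodMk hV')).comap_le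
  have hmM : MeasurableSpace.comap (fun ω => (W ω, V' ω)) inferInstance
      ≤ MeasurableSpace.comap (fun ω => (W ω, V ω, V' ω)) inferInstance :=
    Measurable.comap_le <| (measurable_fst.prodMk measurable_snd.snd).comp (comap_measurable _)
  have hVM : Measurable[MeasurableSpace.comap (fun ω => (W ω, V ω, V' ω)) inferInstance] V :=
    measurable_snd.fst.comp (comap_measurable _)
  refine condExp_inter_ae_eq_mul_of_le hmM hM
    ((condIndepFun_iff_condExp_inter_preimage_eq_mul (hm' := hM) hU hV).1
      (condIndepFun_of_measurable_right hU hVM) s t hs ht) ?_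
  have hWle : MeasurableSpace.comap W inferInstance
      ≤ MeasurableSpace.comap (fun ω => (W ω, V' ω)) inferInstance :=
    Measurable.comap_le <| measurable_fst.comp (comap_measurable _)
  exact ⟨_, stronglyMeasurable_condExp.mono hWle,
    condExp_preimage_ae_eq_of_condIndepFun hU (hV.prodMk hV') hW h.symm hs⟩

theorem CondIndepFun.contraction [MeasurableSpace α] [MeasurableSpace β] [StandardBorelSpace β]
    [Nonempty β] [MeasurableSpace γ] [StandardBorelSpace γ] [Nonempty γ] [MeasurableSpace δ]
    {U : Ω → α} {Y : Ω → β} {C : Ω → γ} {W : Ω → δ} (hU : Measurable U) (hY : Measurable Y)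
    (hC : Measurable C) (hW : Measurable W)
    (h₁ : U ⟂ᵢ[fun ω => (W ω, Y ω), hW.prodMk hY; μ] C) (h₂ : Y ⟂ᵢ[W, hW; μ] C) :
    (fun ω => (U ω, Y ω)) ⟂ᵢ[W, hW; μ] C := by
  refine condIndepFun_prodMk_left_of_forall_preimage hW.comap_le hU hY hC fun s r t hs hr ht => ?_
  have hmM : MeasurableSpace.comap W inferInstance
      ≤ MeasurableSpace.comap (fun ω => (W ω, Y ω)) inferInstance :=
    Measurable.comap_le <| measurable_fst.comp (comap_measurable _)
  have hYr : MeasurableSet[MeasurableSpace.comap (fun ω => (W ω, Y ω)) inferInstance] (Y ⁻¹' r) :=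
    measurable_snd.comp (comap_measurable _) hr
  have hCUY := condExp_inter_inter_ae_eq_mul (hC ht) (hU hs) hYr
    ((condIndepFun_iff_condExp_inter_preimage_eq_mul hC hU).1 h₁.symm t s ht hs)
  have h := condExp_inter_ae_eq_mul_of_le hmM (hW.prodMk hY).comap_le hCUY
    ⟨_, stronglyMeasurable_condExp, condExp_preimage_ae_eq_of_condIndepFun hC hY hW h₂ ht⟩
  rw [Set.inter_comm, mul_comm]
  exact h

theorem CondIndepFun.of_comap_eq [MeasurableSpace β] [MeasurableSpace β'] [MeasurableSpace γ]
    [MeasurableSpace δ] {f : Ω → β} {g : Ω → β'} {k : Ω → γ} {k' : Ω → δ}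
    (hk : Measurable k) (hk' : Measurable k')
    (hkk' : MeasurableSpace.comap k inferInstance = MeasurableSpace.comap k' inferInstance)
    (h : f ⟂ᵢ[k, hk; μ] g) : f ⟂ᵢ[k', hk'; μ] g := by
  convert h using 2
  exact hkk'.symm

end ProbabilityTheory

theorem survival_censoring_cond_indep_general
    {Ω : Type*} [MeasurableSpace Ω] [StandardBorelSpace Ω]
    {p q : ℕ}
    (μ : Measure Ω) [IsProbabilityMeasure μ]
    (B : Ω → Bool) (T₀ C : Ω → ℝ) (X : Ω → (Fin p → ℝ)) (Z : Ω → (Fin q → ℝ))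
    (hB : Measurable B) (hT₀ : Measurable T₀) (hC : Measurable C)
    (hX : Measurable X) (hZ : Measurable Z)
    (T : Ω → ENNReal)
    (hT : ∀ ω, T ω = if B ω then ENNReal.ofReal (T₀ ω) else (⊤ : ENNReal))
    (h1 : CondIndepFun (MeasurableSpace.comap Z inferInstance) hZ.comap_le
      T₀ (fun ω => (C ω, X ω)) μ)
    (h2 : CondIndepFun (MeasurableSpace.comap X inferInstance) hX.comap_le
      B (fun ω => (C ω, T₀ ω, Z ω)) μ) :
    CondIndepFun (MeasurableSpace.comap (fun ω => (X ω, Z ω)) inferInstance)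
      ((hX.prodMk hZ).comap_le) T C μ := by
  have hT₀C : T₀ ⟂ᵢ[fun ω => (X ω, Z ω), hX.prodMk hZ; μ] C :=
    (h1.weak_union hT₀ hC hX hZ).of_comap_eq (hZ.prodMk hX) (hX.prodMk hZ) (by
      simp only [inferInstance, Prod.instMeasurableSpace, MeasurableSpace.comap_prodMk, sup_comm])
  have hBC : B ⟂ᵢ[fun ω => ((X ω, Z ω), T₀ ω), (hX.prodMk hZ).prodMk hT₀; μ] C :=
    (h2.weak_union hB hC (hT₀.prodMk hZ) hX).of_comap_eq
      (hX.prodMk (hT₀.prodMk hZ)) ((hX.prodMk hZ).prodMk hT₀) (by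
      simp only [inferInstance, Prod.instMeasurableSpace, MeasurableSpace.comap_prodMk]
      ac_rfl)
  let survival : Bool × ℝ → ENNReal := fun x => if x.1 then ENNReal.ofReal x.2 else ⊤
  have hsurvival : Measurable survival :=
    Measurable.ite (measurable_fst (measurableSet_singleton true))
      (ENNReal.measurable_ofReal.comp measurable_snd) measurable_const
  rw [show T = survival ∘ fun ω => (B ω, T₀ ω) from funext hT]
  exact (hBC.contraction hB hT₀ hC (hX.prodMk hZ) hT₀C).comp hsurvival measurable_id

/-- Lemma 1 of the paper: in the mixture cure model, if `T₀ ⟂ (C, X) | Z` and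
`B ⟂ (C, T₀, Z) | X`, then the survival time `T` (equal to `T₀` for uncured
individuals, `B = true`, and to `∞` for cured individuals) and the censoring
time `C` are conditionally independent given `(X, Z)`. -/
theorem survival_censoring_cond_indep
    {Ω : Type*} [MeasurableSpace Ω] [StandardBorelSpace Ω]
    {p q : ℕ}
    (μ : Measure Ω) [IsProbabilityMeasure μ]
    (B : Ω → Bool) (T₀ C : Ω → ℝ) (X : Ω → (Fin p → ℝ)) (Z : Ω → (Fin q → ℝ))
    (hB : Measurable B) (hT₀ : Measurable T₀) (hC : Measurable C)
    (hX : Measurable X) (hZ : Measurable Z)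
    (hT₀nn : ∀ ω, 0 ≤ T₀ ω) (hCnn : ∀ ω, 0 ≤ C ω)
    (T : Ω → ENNReal)
    (hT : ∀ ω, T ω = if B ω then ENNReal.ofReal (T₀ ω) else (⊤ : ENNReal))
    (h1 : CondIndepFun (MeasurableSpace.comap Z inferInstance) hZ.comap_le
      T₀ (fun ω => (C ω, X ω)) μ)
    (h2 : CondIndepFun (MeasurableSpace.comap X inferInstance) hX.comap_le
      B (fun ω => (C ω, T₀ ω, Z ω)) μ) :
    CondIndepFun (MeasurableSpace.comap (fun ω => (X ω, Z ω)) inferInstance)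
      ((hX.prodMk hZ).comap_le) T C μ :=
  survival_censoring_cond_indep_general μ B T₀ C X Z hB hT₀ hC hX hZ T hT h1 h2
end

section
/- (Theorem 1: strong consistency of the presmoothed incidence estimator.) Let γ̂ₙ : Ω → G be any functions such that for every ω ∈ Ω and every n ≥ 1, γ̂ₙ(ω) maximizes γ ↦ log L̂_{n,1}(γ)(ω) over G. Then γ̂ₙ → γ₀ almost surely. -/
/-!
The limit criterion `M γ = 𝔼[φ(γ₀, X) log φ(γ, X) + (1 - φ(γ₀, X)) log (1 - φ(γ, X))]` is, by Gibbs'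
inequality and identifiability, uniquely maximized at `γ₀`, and it is continuous on the compact
set `G`. The normalized presmoothed log-likelihood converges to `M` uniformly on `G` almost surely:
the oracle criterion (with `π₀` in place of `π̂ₙ`) does so by the strong law of large numbers on a
countable dense subset of `G` together with the uniform Hölder continuity in `γ`, and replacing
`π₀` by `π̂ₙ` costs at most `sup |π̂ₙ - π₀| · |log ε|` by (AC4). A maximizer of a criterion
converging uniformly to a continuous function with a unique maximizer on a compact set converges
to that maximizer.
-/

open MeasureTheory ProbabilityTheory Filter Topology Set

section BernoulliLogLik

/-- The expected log-likelihood of a Bernoulli(`q`) observation under Bernoulli(`p`) data; the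
`i`-th summand of `log L̂_{n,1}(γ)` is `bernoulliLogLik (1 - π̂ₙ(Xᵢ)) (φ(γ, Xᵢ))`. -/
noncomputable def bernoulliLogLik (p q : ℝ) : ℝ := p * Real.log q + (1 - p) * Real.log (1 - q)

variable {ε p p' q q' : ℝ}

theorem bernoulliLogLik_lt_self (hp₀ : 0 < p) (hp₁ : p < 1) (hq₀ : 0 < q) (hq₁ : q < 1)
    (hqp : q ≠ p) : bernoulliLogLik p q < bernoulliLogLik p p := by
  -- Gibbs: `log t ≤ t - 1`, strictly for `t ≠ 1`, at `t = q / p` and `t = (1 - q) / (1 - p)`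
  have h₁ : Real.log (q / p) < q / p - 1 :=
    Real.log_lt_sub_one_of_pos (by positivity) (by rwa [ne_eq, div_eq_one_iff_eq hp₀.ne'])
  have h₂ : Real.log ((1 - q) / (1 - p)) ≤ (1 - q) / (1 - p) - 1 :=
    Real.log_le_sub_one_of_pos (div_pos (by linarith) (by linarith))
  rw [Real.log_div hq₀.ne' hp₀.ne'] at h₁
  rw [Real.log_div (by linarith) (by linarith)] at h₂
  have h₁' := mul_lt_mul_of_pos_left h₁ hp₀
  have h₂' := mul_le_mul_of_nonneg_left h₂ (sub_nonneg.2 hp₁.le)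
  rw [show p * (q / p - 1) = q - p by field_simp] at h₁'
  rw [show (1 - p) * ((1 - q) / (1 - p) - 1) = p - q by
    field_simp [(sub_pos.2 hp₁).ne']; ring] at h₂'
  unfold bernoulliLogLik
  nlinarith

theorem log_mem_Icc_of_mem_Icc (hε : 0 < ε) (hq : q ∈ Icc ε (1 - ε)) :
    Real.log q ∈ Icc (Real.log ε) 0 ∧ Real.log (1 - q) ∈ Icc (Real.log ε) 0 := by
  obtain ⟨hεq, hq1⟩ := hq
  exact ⟨⟨Real.log_le_log hε hεq, Real.log_nonpos (by linarith) (by linarith)⟩,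
    ⟨Real.log_le_log hε (by linarith), Real.log_nonpos (by linarith) (by linarith)⟩⟩

theorem abs_bernoulliLogLik_le (hε : 0 < ε) (hp : p ∈ Icc 0 1) (hq : q ∈ Icc ε (1 - ε)) :
    |bernoulliLogLik p q| ≤ -Real.log ε := by
  obtain ⟨⟨h₁, h₂⟩, h₃, h₄⟩ := log_mem_Icc_of_mem_Icc hε hq
  obtain ⟨hp₀, hp₁⟩ := hp
  unfold bernoulliLogLik
  rw [abs_le]
  constructor <;> nlinarith

theorem abs_bernoulliLogLik_sub_left_le (hε : 0 < ε) (hq : q ∈ Icc ε (1 - ε)) :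
    |bernoulliLogLik p q - bernoulliLogLik p' q| ≤ |p - p'| * -Real.log ε := by
  obtain ⟨⟨h₁, h₂⟩, h₃, h₄⟩ := log_mem_Icc_of_mem_Icc hε hq
  have hlog : |Real.log q - Real.log (1 - q)| ≤ -Real.log ε :=
    abs_sub_le_iff.2 ⟨by linarith, by linarith⟩
  calc |bernoulliLogLik p q - bernoulliLogLik p' q|
      = |p - p'| * |Real.log q - Real.log (1 - q)| := by
        rw [← abs_mul]; unfold bernoulliLogLik; ring_nf
    _ ≤ |p - p'| * -Real.log ε := mul_le_mul_of_nonneg_left hlog (abs_nonneg _)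

theorem abs_log_sub_log_le (hε : 0 < ε) (hq : ε ≤ q) (hq' : ε ≤ q') :
    |Real.log q - Real.log q'| ≤ |q - q'| / ε := by
  wlog h : q' ≤ q generalizing q q'
  · rw [abs_sub_comm, abs_sub_comm q]; exact this hq' hq (le_of_not_ge h)
  have hq'₀ : 0 < q' := hε.trans_le hq'
  have hlog := Real.log_le_sub_one_of_pos (div_pos (hε.trans_le hq) hq'₀)
  rw [Real.log_div (hε.trans_le hq).ne' hq'₀.ne', div_sub_one hq'₀.ne'] at hlog
  rw [abs_of_nonneg (sub_nonneg.2 (Real.log_le_log hq'₀ h)), abs_of_nonneg (sub_nonneg.2 h)]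
  exact hlog.trans (div_le_div_of_nonneg_left (sub_nonneg.2 h) hε hq')

theorem abs_bernoulliLogLik_sub_right_le (hε : 0 < ε) (hp : p ∈ Icc 0 1)
    (hq : q ∈ Icc ε (1 - ε)) (hq' : q' ∈ Icc ε (1 - ε)) :
    |bernoulliLogLik p q - bernoulliLogLik p q'| ≤ |q - q'| / ε := by
  obtain ⟨hp₀, hp₁⟩ := hp
  have h₁ := abs_log_sub_log_le hε hq.1 hq'.1
  have h₂ := abs_log_sub_log_le (q := 1 - q) (q' := 1 - q') hε (by linarith [hq.2])
    (by linarith [hq'.2])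
  rw [show 1 - q - (1 - q') = -(q - q') by ring, abs_neg] at h₂
  calc |bernoulliLogLik p q - bernoulliLogLik p q'|
      = |p * (Real.log q - Real.log q') + (1 - p) * (Real.log (1 - q) - Real.log (1 - q'))| := by
        unfold bernoulliLogLik; ring_nf
    _ ≤ p * |Real.log q - Real.log q'| + (1 - p) * |Real.log (1 - q) - Real.log (1 - q')| := by
        refine (abs_add_le _ _).trans_eq ?_
        rw [abs_mul, abs_mul, abs_of_nonneg hp₀, abs_of_nonneg (sub_nonneg.2 hp₁)]
    _ ≤ p * (|q - q'| / ε) + (1 - p) * (|q - q'| / ε) := by gcongr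
    _ = |q - q'| / ε := by ring

end BernoulliLogLik

section UniformConvergence

variable {α β ι : Type*}

theorem abs_sum_div_sub_sum_div_le {a b : ℕ → ℝ} {η : ℝ} (hη : 0 ≤ η) (h : ∀ i, |a i - b i| ≤ η)
    (n : ℕ) :
    |(∑ i ∈ Finset.range n, a i) / n - (∑ i ∈ Finset.range n, b i) / n| ≤ η := by
  rw [← sub_div, ← Finset.sum_sub_distrib, abs_div, Nat.abs_cast]
  refine div_le_of_le_mul₀ n.cast_nonneg hη ((Finset.abs_sum_le_sum_abs _ _).trans ?_)
  simpa [mul_comm] using Finset.sum_le_card_nsmul (Finset.range n) _ η fun i _ => h i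

theorem exists_pos_mul_rpow_le (L : ℝ) {a η : ℝ} (ha : 0 < a) (hη : 0 < η) :
    ∃ δ > 0, L * δ ^ a ≤ η := by
  have hlim : Tendsto (fun t : ℝ => L * t ^ a) (𝓝 0) (𝓝 0) := by
    simpa [Real.zero_rpow ha.ne'] using
      tendsto_const_nhds.mul (Real.continuousAt_rpow_const 0 a (Or.inr ha.le)).tendsto
  obtain ⟨δ, hδ, hδ₀⟩ :=
    ((hlim.mono_left nhdsWithin_le_nhds).eventually (ge_mem_nhds hη)).and
      (self_mem_nhdsWithin (s := Ioi 0)) |>.exists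
  exact ⟨δ, hδ₀, hδ⟩

theorem exists_dist_le_of_holder [PseudoMetricSpace α] {K : Set α} {S : Set β} {g : α → β → ℝ}
    {L a : ℝ} (hL : 0 ≤ L) (ha : 0 < a)
    (hg : ∀ γ₁ ∈ K, ∀ γ₂ ∈ K, ∀ x ∈ S, dist (g γ₁ x) (g γ₂ x) ≤ L * dist γ₁ γ₂ ^ a) :
    ∀ η > 0, ∃ δ > 0, ∀ γ₁ ∈ K, ∀ γ₂ ∈ K, dist γ₁ γ₂ ≤ δ → ∀ x ∈ S, dist (g γ₁ x) (g γ₂ x) ≤ η := by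
  intro η hη
  obtain ⟨δ, hδ, hLδ⟩ := exists_pos_mul_rpow_le L ha hη
  refine ⟨δ, hδ, fun γ₁ h₁ γ₂ h₂ hdist x hx => (hg γ₁ h₁ γ₂ h₂ x hx).trans (le_trans ?_ hLδ)⟩
  gcongr

theorem tendstoUniformlyOn_of_tendsto_of_subset_closure [PseudoMetricSpace α] [PseudoMetricSpace β]
    {l : Filter ι} {K D : Set α} (hK : IsCompact K) (hDK : D ⊆ K) (hKD : K ⊆ closure D)
    {F : ι → α → β} {f : α → β}
    (hF : ∀ η > 0, ∃ δ > 0, ∀ x ∈ K, ∀ y ∈ K, dist x y ≤ δ → ∀ i, dist (F i x) (F i y) ≤ η)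
    (hf : UniformContinuousOn f K) (hD : ∀ y ∈ D, Tendsto (F · y) l (𝓝 (f y))) :
    TendstoUniformlyOn F f l K := by
  refine Metric.tendstoUniformlyOn_iff.2 fun η hη => ?_
  obtain ⟨δ₁, hδ₁, hF⟩ := hF (η / 4) (by positivity)
  obtain ⟨δ₂, hδ₂, hf⟩ := Metric.uniformContinuousOn_iff_le.1 hf (η / 4) (by positivity)
  have hδ : 0 < min δ₁ δ₂ := lt_min hδ₁ hδ₂
  obtain ⟨T, hTD, hTfin, hKT⟩ := hK.elim_finite_subcover_image (b := D)
    (c := fun y => Metric.ball y (min δ₁ δ₂)) (fun _ _ => Metric.isOpen_ball) fun x hx => by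
      obtain ⟨y, hy, hxy⟩ := Metric.mem_closure_iff.1 (hKD hx) _ hδ
      exact mem_iUnion₂.2 ⟨y, hy, Metric.mem_ball.2 hxy⟩
  have hT : ∀ᶠ i in l, ∀ y ∈ T, dist (F i y) (f y) < η / 4 :=
    (eventually_all_finite hTfin).2 fun y hy =>
      Metric.tendsto_nhds.1 (hD y (hTD hy)) _ (by positivity)
  filter_upwards [hT] with i hi x hx
  obtain ⟨y, hyT, hxy⟩ := mem_iUnion₂.1 (hKT hx)
  have hxy' : dist x y ≤ δ₁ ∧ dist x y ≤ δ₂ :=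
    le_min_iff.1 (Metric.mem_ball.1 hxy).le
  calc dist (f x) (F i x) ≤ dist (f x) (f y) + dist (f y) (F i y) + dist (F i y) (F i x) :=
        dist_triangle4 _ _ _ _
    _ < η := by
        have h₁ := hf x hx y (hDK (hTD hyT)) hxy'.2
        have h₂ := hi y hyT
        have h₃ := hF x hx y (hDK (hTD hyT)) hxy'.1 i
        rw [dist_comm] at h₂ h₃
        linarith

theorem tendsto_maximizer_of_tendstoUniformlyOn [TopologicalSpace α] {l : Filter ι} {K : Set α}
    (hK : IsCompact K) {M : α → ℝ} (hM : ContinuousOn M K) {x₀ : α} (hx₀ : x₀ ∈ K)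
    (hM_lt : ∀ x ∈ K, x ≠ x₀ → M x < M x₀) {F : ι → α → ℝ} (hF : TendstoUniformlyOn F M l K)
    {x : ι → α} (hxK : ∀ᶠ i in l, x i ∈ K) (hx_max : ∀ᶠ i in l, F i x₀ ≤ F i (x i)) :
    Tendsto x l (𝓝 x₀) := by
  refine tendsto_nhds.2 fun U hU hx₀U => ?_
  rcases (K \ U).eq_empty_or_nonempty with hKU | hKU
  · filter_upwards [hxK] with i hi using sdiff_eq_empty.1 hKU hi
  obtain ⟨y, hy, hy_max⟩ := (hK.diff hU).exists_isMaxOn hKU (hM.mono sdiff_subset)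
  have hgap : 0 < M x₀ - M y := sub_pos.2 (hM_lt y hy.1 fun h => hy.2 (h ▸ hx₀U))
  filter_upwards [Metric.tendstoUniformlyOn_iff.1 hF _ (half_pos hgap), hxK, hx_max]
    with i hi hiK hi_max
  by_contra hiU
  have h₀ := hi x₀ hx₀
  have h₁ := hi (x i) hiK
  have h₂ : M (x i) ≤ M y := hy_max ⟨hiK, hiU⟩
  rw [Real.dist_eq, abs_lt] at h₀ h₁
  linarith

end UniformConvergence

section StrongLaw

variable {Ω E α : Type*} [MeasurableSpace Ω] {μ : Measure Ω}

theorem uniformContinuousOn_integral [IsProbabilityMeasure μ] [PseudoMetricSpace α] {K : Set α}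
    {S : Set E} {Y : Ω → E} (hYS : ∀ ω, Y ω ∈ S) {g : α → E → ℝ}
    (hint : ∀ γ ∈ K, Integrable (fun ω => g γ (Y ω)) μ)
    (hg : ∀ η > 0, ∃ δ > 0, ∀ γ₁ ∈ K, ∀ γ₂ ∈ K, dist γ₁ γ₂ ≤ δ → ∀ x ∈ S,
      dist (g γ₁ x) (g γ₂ x) ≤ η) :
    UniformContinuousOn (fun γ => ∫ ω, g γ (Y ω) ∂μ) K := by
  refine Metric.uniformContinuousOn_iff_le.2 fun η hη => ?_
  obtain ⟨δ, hδ, hg⟩ := hg η hη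
  refine ⟨δ, hδ, fun γ₁ h₁ γ₂ h₂ hdist => ?_⟩
  rw [dist_eq_norm, ← integral_sub (hint γ₁ h₁) (hint γ₂ h₂)]
  simpa using norm_integral_le_of_norm_le_const (μ := μ)
    (ae_of_all _ fun ω => (dist_eq_norm _ _).symm.trans_le (hg γ₁ h₁ γ₂ h₂ hdist _ (hYS ω)))

variable [MeasurableSpace E] {X : ℕ → Ω → E}

theorem strong_law_ae_comp (hX : ∀ i, Measurable (X i)) (hindep : iIndepFun X μ)
    (hident : ∀ i, μ.map (X i) = μ.map (X 0)) {g : E → ℝ} (hg : Measurable g)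
    (hint : Integrable (fun ω => g (X 0 ω)) μ) :
    ∀ᵐ ω ∂μ, Tendsto (fun n : ℕ => (∑ i ∈ Finset.range n, g (X i ω)) / n) atTop
      (𝓝 (∫ ω, g (X 0 ω) ∂μ)) :=
  strong_law_ae_real (fun i ω => g (X i ω)) hint
    (fun _ _ hij => (hindep.indepFun hij).comp hg hg)
    fun i => IdentDistrib.comp ⟨(hX i).aemeasurable, (hX 0).aemeasurable, hident i⟩ hg

theorem uniform_strong_law_ae [IsProbabilityMeasure μ] [PseudoMetricSpace α] {K : Set α}
    (hK : IsCompact K) {S : Set E} (hX : ∀ i, Measurable (X i)) (hXS : ∀ i ω, X i ω ∈ S)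
    (hindep : iIndepFun X μ) (hident : ∀ i, μ.map (X i) = μ.map (X 0)) {g : α → E → ℝ}
    (hg : ∀ γ ∈ K, Measurable (g γ)) (hint : ∀ γ ∈ K, Integrable (fun ω => g γ (X 0 ω)) μ)
    (hg_equi : ∀ η > 0, ∃ δ > 0, ∀ γ₁ ∈ K, ∀ γ₂ ∈ K, dist γ₁ γ₂ ≤ δ → ∀ x ∈ S,
      dist (g γ₁ x) (g γ₂ x) ≤ η) :
    ∀ᵐ ω ∂μ, TendstoUniformlyOn (fun n γ => (∑ i ∈ Finset.range n, g γ (X i ω)) / n)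
      (fun γ => ∫ ω, g γ (X 0 ω) ∂μ) atTop K := by
  obtain ⟨D, hDK, hD, hKD⟩ := hK.isSeparable.exists_countable_dense_subset
  have hlaw : ∀ᵐ ω ∂μ, ∀ γ ∈ D, Tendsto (fun n : ℕ => (∑ i ∈ Finset.range n, g γ (X i ω)) / n)
      atTop (𝓝 (∫ ω, g γ (X 0 ω) ∂μ)) :=
    (ae_ball_iff hD).2 fun γ hγ =>
      strong_law_ae_comp hX hindep hident (hg γ (hDK hγ)) (hint γ (hDK hγ))
  filter_upwards [hlaw] with ω hω
  refine tendstoUniformlyOn_of_tendsto_of_subset_closure hK hDK hKD (fun η hη => ?_)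
    (uniformContinuousOn_integral (hXS 0) hint hg_equi) hω
  obtain ⟨δ, hδ, hg_equi⟩ := hg_equi η hη
  exact ⟨δ, hδ, fun γ₁ h₁ γ₂ h₂ hdist n => abs_sum_div_sub_sum_div_le hη.le
    (fun i => hg_equi γ₁ h₁ γ₂ h₂ hdist _ (hXS i ω)) n⟩

end StrongLaw

section Presmoothing

variable {Ω E α : Type*} [MeasurableSpace Ω] {μ : Measure Ω} {ε : ℝ}

theorem Measurable.bernoulliLogLik [MeasurableSpace E] {P Q : E → ℝ} (hP : Measurable P)
    (hQ : Measurable Q) : Measurable fun x => bernoulliLogLik (P x) (Q x) := by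
  unfold _root_.bernoulliLogLik
  fun_prop

theorem integrable_bernoulliLogLik [IsFiniteMeasure μ] (hε : 0 < ε) {P Q : Ω → ℝ}
    (hPm : Measurable P) (hQm : Measurable Q) (hP : ∀ ω, P ω ∈ Icc 0 1)
    (hQ : ∀ ω, Q ω ∈ Icc ε (1 - ε)) : Integrable (fun ω => bernoulliLogLik (P ω) (Q ω)) μ :=
  .of_bound (hPm.bernoulliLogLik hQm).aestronglyMeasurable _
    (ae_of_all _ fun ω => abs_bernoulliLogLik_le hε (hP ω) (hQ ω))

theorem integral_bernoulliLogLik_lt [IsFiniteMeasure μ] (hε : 0 < ε) {P Q : Ω → ℝ}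
    (hPm : Measurable P) (hQm : Measurable Q) (hP : ∀ ω, P ω ∈ Icc ε (1 - ε))
    (hQ : ∀ ω, Q ω ∈ Icc ε (1 - ε)) (hQP : ¬ ∀ᵐ ω ∂μ, Q ω = P ω) :
    ∫ ω, bernoulliLogLik (P ω) (Q ω) ∂μ < ∫ ω, bernoulliLogLik (P ω) (P ω) ∂μ := by
  have hP01 : ∀ ω, P ω ∈ Icc 0 1 := fun ω => Icc_subset_Icc hε.le (by linarith) (hP ω)
  have hPP := integrable_bernoulliLogLik (μ := μ) hε hPm hPm hP01 hP
  have hPQ := integrable_bernoulliLogLik (μ := μ) hε hPm hQm hP01 hQ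
  have hlt : ∀ ω, Q ω ≠ P ω → bernoulliLogLik (P ω) (Q ω) < bernoulliLogLik (P ω) (P ω) :=
    fun ω => bernoulliLogLik_lt_self (hε.trans_le (hP ω).1) ((hP ω).2.trans_lt (by linarith))
      (hε.trans_le (hQ ω).1) ((hQ ω).2.trans_lt (by linarith))
  have hle : ∀ ω, bernoulliLogLik (P ω) (Q ω) ≤ bernoulliLogLik (P ω) (P ω) := fun ω =>
    (eq_or_ne (Q ω) (P ω)).elim (fun h => h ▸ le_rfl) fun h => (hlt ω h).le
  refine (integral_mono hPQ hPP hle).lt_of_ne fun heq => hQP ?_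
  have hzero := (integral_eq_zero_iff_of_nonneg (fun ω => sub_nonneg.2 (hle ω)) (hPP.sub hPQ)).1
    (by rw [integral_sub hPP hPQ, heq, sub_self])
  filter_upwards [hzero] with ω hω
  by_contra hne
  exact (sub_pos.2 (hlt ω hne)).ne' hω

theorem dist_bernoulliLogLik_le_of_holder [PseudoMetricSpace α] {K : Set α} {S : Set E}
    (hε : 0 < ε) {P : E → ℝ} (hP : ∀ x ∈ S, P x ∈ Icc 0 1) {Φ : α → E → ℝ}
    (hΦ : ∀ γ ∈ K, ∀ x ∈ S, Φ γ x ∈ Icc ε (1 - ε)) {c a : ℝ}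
    (hΦ_holder : ∀ γ₁ ∈ K, ∀ γ₂ ∈ K, ∀ x ∈ S, dist (Φ γ₁ x) (Φ γ₂ x) ≤ c * dist γ₁ γ₂ ^ a) :
    ∀ γ₁ ∈ K, ∀ γ₂ ∈ K, ∀ x ∈ S,
      dist (bernoulliLogLik (P x) (Φ γ₁ x)) (bernoulliLogLik (P x) (Φ γ₂ x))
        ≤ c / ε * dist γ₁ γ₂ ^ a := fun γ₁ h₁ γ₂ h₂ x hx =>
  calc _ ≤ dist (Φ γ₁ x) (Φ γ₂ x) / ε :=
        abs_bernoulliLogLik_sub_right_le hε (hP x hx) (hΦ γ₁ h₁ x hx) (hΦ γ₂ h₂ x hx)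
    _ ≤ c / ε * dist γ₁ γ₂ ^ a := by
        rw [div_mul_eq_mul_div]
        exact div_le_div_of_nonneg_right (hΦ_holder γ₁ h₁ γ₂ h₂ x hx) hε.le

theorem tendstoUniformlyOn_avg_bernoulliLogLik {l : Filter ℕ} {K : Set α} {S : Set E}
    {x : ℕ → E} (hxS : ∀ i, x i ∈ S) (hε : 0 < ε) {Φ : α → E → ℝ}
    (hΦ : ∀ γ ∈ K, ∀ y ∈ S, Φ γ y ∈ Icc ε (1 - ε)) {P : ℕ → E → ℝ} {P₀ : E → ℝ}
    (hP : TendstoUniformlyOn P P₀ l S) {M : α → ℝ}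
    (hM : TendstoUniformlyOn
      (fun n γ => (∑ i ∈ Finset.range n, bernoulliLogLik (P₀ (x i)) (Φ γ (x i))) / n) M l K) :
    TendstoUniformlyOn
      (fun n γ => (∑ i ∈ Finset.range n, bernoulliLogLik (P n (x i)) (Φ γ (x i))) / n) M l K := by
  set C := |Real.log ε| + 1
  have hC : 0 < C := by positivity
  refine Metric.tendstoUniformlyOn_iff.2 fun η hη => ?_
  filter_upwards [Metric.tendstoUniformlyOn_iff.1 hM (η / 2) (by positivity),
    Metric.tendstoUniformlyOn_iff.1 hP (η / (2 * C)) (by positivity)] with n hMn hPn γ hγ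
  have hterm : ∀ i, |bernoulliLogLik (P₀ (x i)) (Φ γ (x i))
      - bernoulliLogLik (P n (x i)) (Φ γ (x i))| ≤ η / 2 := fun i =>
    calc _ ≤ |P₀ (x i) - P n (x i)| * -Real.log ε :=
          abs_bernoulliLogLik_sub_left_le hε (hΦ γ hγ _ (hxS i))
      _ ≤ |P₀ (x i) - P n (x i)| * C :=
          mul_le_mul_of_nonneg_left (by linarith [neg_le_abs (Real.log ε)]) (abs_nonneg _)
      _ ≤ η / (2 * C) * C := mul_le_mul_of_nonneg_right (hPn _ (hxS i)).le hC.le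
      _ = η / 2 := by field_simp
  calc dist (M γ) _ ≤ dist (M γ) ((∑ i ∈ Finset.range n,
          bernoulliLogLik (P₀ (x i)) (Φ γ (x i))) / n) + dist _ _ := dist_triangle _ _ _
    _ < η / 2 + η / 2 :=
        add_lt_add_of_lt_of_le (hMn γ hγ) (abs_sum_div_sub_sum_div_le (by positivity) hterm n)
    _ = η := add_halves η

end Presmoothing

theorem presmoothing_consistency_general
    {Ω : Type*} [MeasurableSpace Ω] (μ : Measure Ω) [IsProbabilityMeasure μ]
    {p : ℕ} (𝒳 : Set (Fin p → ℝ))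
    (X : ℕ → Ω → (Fin p → ℝ))
    (hXmeas : ∀ i, Measurable (X i))
    (hXval : ∀ i ω, X i ω ∈ 𝒳)
    (hindep : iIndepFun X μ)
    (hident : ∀ i, Measure.map (X i) μ = Measure.map (X 0) μ)
    (G : Set (Fin p → ℝ)) (hG : IsCompact G)
    (γ₀ : Fin p → ℝ) (hγ₀ : γ₀ ∈ G)
    (φ : (Fin p → ℝ) → (Fin p → ℝ) → ℝ)
    (hφmeas : ∀ γ ∈ G, Measurable (φ γ))
    -- (AC3): Hölder continuity in the parameter, uniformly over `𝒳`
    (hAC3 : ∃ a > (0 : ℝ), ∃ c > (0 : ℝ), ∀ γ₁ ∈ G, ∀ γ₂ ∈ G, ∀ x ∈ 𝒳,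
      |φ γ₁ x - φ γ₂ x| ≤ c * ‖γ₁ - γ₂‖ ^ a)
    -- (AC4): `φ` is bounded away from `0` and `1` on `G × 𝒳`
    (hAC4 : ∃ ε > (0 : ℝ), ∀ γ ∈ G, ∀ x ∈ 𝒳, ε ≤ φ γ x ∧ φ γ x ≤ 1 - ε)
    -- identifiability: `ℙ(φ(γ, X₁) = φ(γ̃, X₁)) = 1` implies `γ = γ̃`
    (hid : ∀ γ ∈ G, ∀ γ' ∈ G,
      (∀ᵐ ω ∂μ, φ γ (X 0 ω) = φ γ' (X 0 ω)) → γ = γ')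
    -- the preliminary nonparametric estimators `π̂ₙ`, with values in `[0, 1]`
    (πhat : ℕ → Ω → (Fin p → ℝ) → ℝ)
    -- (AC1): `sup_{x ∈ 𝒳} |π̂ₙ(x) − π₀(x)| → 0` almost surely, `π₀ = 1 − φ(γ₀, ·)`
    (hAC1 : ∀ᵐ ω ∂μ, TendstoUniformlyOn (fun n x => πhat n ω x)
      (fun x => 1 - φ γ₀ x) atTop 𝒳)
    -- `γ̂ₙ` maximizes `log L̂_{n,1}` over `G`
    (γhat : ℕ → Ω → (Fin p → ℝ))
    (hγhatG : ∀ n ω, γhat n ω ∈ G)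
    (hmax : ∀ (n : ℕ), 1 ≤ n → ∀ ω, ∀ γ ∈ G,
      (∑ i ∈ Finset.range n,
        ((1 - πhat n ω (X i ω)) * Real.log (φ γ (X i ω))
          + πhat n ω (X i ω) * Real.log (1 - φ γ (X i ω))))
      ≤ ∑ i ∈ Finset.range n,
        ((1 - πhat n ω (X i ω)) * Real.log (φ (γhat n ω) (X i ω))
          + πhat n ω (X i ω) * Real.log (1 - φ (γhat n ω) (X i ω)))) :
    ∀ᵐ ω ∂μ, Tendsto (fun n => γhat n ω) atTop (nhds γ₀) := by
  obtain ⟨a, ha, c, hc, hAC3⟩ := hAC3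
  obtain ⟨ε, hε, hφ⟩ := hAC4
  have hφ₀ : ∀ x ∈ 𝒳, φ γ₀ x ∈ Icc 0 1 := fun x hx =>
    Icc_subset_Icc hε.le (by linarith) (hφ γ₀ hγ₀ x hx)
  set f : (Fin p → ℝ) → (Fin p → ℝ) → ℝ := fun γ x => bernoulliLogLik (φ γ₀ x) (φ γ x)
  have hf_meas : ∀ γ ∈ G, Measurable (f γ) := fun γ hγ =>
    (hφmeas γ₀ hγ₀).bernoulliLogLik (hφmeas γ hγ)
  have hf_int : ∀ γ ∈ G, Integrable (fun ω => f γ (X 0 ω)) μ := fun γ hγ =>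
    integrable_bernoulliLogLik hε ((hφmeas γ₀ hγ₀).comp (hXmeas 0))
      ((hφmeas γ hγ).comp (hXmeas 0)) (fun ω => hφ₀ _ (hXval 0 ω))
      (fun ω => hφ γ hγ _ (hXval 0 ω))
  have hf_equi := exists_dist_le_of_holder (div_nonneg hc.le hε.le) ha <|
    dist_bernoulliLogLik_le_of_holder hε hφ₀ hφ <| by
      simpa only [dist_eq_norm, Real.norm_eq_abs] using hAC3
  have hM_lt : ∀ γ ∈ G, γ ≠ γ₀ → ∫ ω, f γ (X 0 ω) ∂μ < ∫ ω, f γ₀ (X 0 ω) ∂μ := fun γ hγ hne =>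
    integral_bernoulliLogLik_lt hε ((hφmeas γ₀ hγ₀).comp (hXmeas 0))
      ((hφmeas γ hγ).comp (hXmeas 0)) (fun ω => hφ γ₀ hγ₀ _ (hXval 0 ω))
      (fun ω => hφ γ hγ _ (hXval 0 ω)) fun h => hne (hid γ hγ γ₀ hγ₀ h)
  filter_upwards [uniform_strong_law_ae hG hXmeas hXval hindep hident hf_meas hf_int hf_equi,
    hAC1] with ω hS hπ
  have hπ' : TendstoUniformlyOn (fun n x => 1 - πhat n ω x) (φ γ₀) atTop 𝒳 := by
    simpa only [Function.comp_def, id, sub_sub_cancel] using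
      ((uniformContinuous_const (b := (1 : ℝ))).sub uniformContinuous_id).comp_tendstoUniformlyOn hπ
  refine tendsto_maximizer_of_tendstoUniformlyOn hG
    (uniformContinuousOn_integral (hXval 0) hf_int hf_equi).continuousOn hγ₀ hM_lt
    (tendstoUniformlyOn_avg_bernoulliLogLik (hXval · ω) hε hφ hπ' hS)
    (.of_forall (hγhatG · ω)) ?_
  filter_upwards [eventually_ge_atTop 1] with n hn
  simpa only [bernoulliLogLik, sub_sub_cancel] using
    div_le_div_of_nonneg_right (hmax n hn ω γ₀ hγ₀) n.cast_nonneg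

/-- Theorem 1 of the paper: strong consistency of the presmoothed incidence
estimator.  If `γ̂ₙ` maximizes the presmoothed logistic-type log-likelihood
`log L̂_{n,1}` over the compact parameter set `G`, then under (AC1)–(AC4) and
the identifiability condition, `γ̂ₙ → γ₀` almost surely. -/
theorem presmoothing_consistency
    {Ω : Type*} [MeasurableSpace Ω] (μ : Measure Ω) [IsProbabilityMeasure μ]
    {p : ℕ} (𝒳 : Set (Fin p → ℝ)) (h𝒳 : MeasurableSet 𝒳)
    (X : ℕ → Ω → (Fin p → ℝ))
    (hXmeas : ∀ i, Measurable (X i))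
    (hXval : ∀ i ω, X i ω ∈ 𝒳)
    (hindep : iIndepFun X μ)
    (hident : ∀ i, Measure.map (X i) μ = Measure.map (X 0) μ)
    (G : Set (Fin p → ℝ)) (hG : IsCompact G)
    (γ₀ : Fin p → ℝ) (hγ₀ : γ₀ ∈ G)
    (φ : (Fin p → ℝ) → (Fin p → ℝ) → ℝ)
    (hφmeas : ∀ γ ∈ G, Measurable (φ γ))
    -- (AC3): Hölder continuity in the parameter, uniformly over `𝒳`
    (hAC3 : ∃ a > (0 : ℝ), ∃ c > (0 : ℝ), ∀ γ₁ ∈ G, ∀ γ₂ ∈ G, ∀ x ∈ 𝒳,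
      |φ γ₁ x - φ γ₂ x| ≤ c * ‖γ₁ - γ₂‖ ^ a)
    -- (AC4): `φ` is bounded away from `0` and `1` on `G × 𝒳`
    (hAC4 : ∃ ε > (0 : ℝ), ∀ γ ∈ G, ∀ x ∈ 𝒳, ε ≤ φ γ x ∧ φ γ x ≤ 1 - ε)
    -- identifiability: `ℙ(φ(γ, X₁) = φ(γ̃, X₁)) = 1` implies `γ = γ̃`
    (hid : ∀ γ ∈ G, ∀ γ' ∈ G,
      (∀ᵐ ω ∂μ, φ γ (X 0 ω) = φ γ' (X 0 ω)) → γ = γ')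
    -- the preliminary nonparametric estimators `π̂ₙ`, with values in `[0, 1]`
    (πhat : ℕ → Ω → (Fin p → ℝ) → ℝ)
    (hπmeas : ∀ n, Measurable (Function.uncurry (πhat n)))
    (hπrange : ∀ n ω x, πhat n ω x ∈ Set.Icc (0 : ℝ) 1)
    -- (AC1): `sup_{x ∈ 𝒳} |π̂ₙ(x) − π₀(x)| → 0` almost surely, `π₀ = 1 − φ(γ₀, ·)`
    (hAC1 : ∀ᵐ ω ∂μ, TendstoUniformlyOn (fun n x => πhat n ω x)
      (fun x => 1 - φ γ₀ x) atTop 𝒳)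
    -- `γ̂ₙ` maximizes `log L̂_{n,1}` over `G`
    (γhat : ℕ → Ω → (Fin p → ℝ))
    (hγhatG : ∀ n ω, γhat n ω ∈ G)
    (hmax : ∀ (n : ℕ), 1 ≤ n → ∀ ω, ∀ γ ∈ G,
      (∑ i ∈ Finset.range n,
        ((1 - πhat n ω (X i ω)) * Real.log (φ γ (X i ω))
          + πhat n ω (X i ω) * Real.log (1 - φ γ (X i ω))))
      ≤ ∑ i ∈ Finset.range n,
        ((1 - πhat n ω (X i ω)) * Real.log (φ (γhat n ω) (X i ω))
          + πhat n ω (X i ω) * Real.log (1 - φ (γhat n ω) (X i ω)))) :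
    ∀ᵐ ω ∂μ, Tendsto (fun n => γhat n ω) atTop (nhds γ₀) :=
  presmoothing_consistency_general μ 𝒳 X hXmeas hXval hindep hident G hG γ₀ hγ₀ φ hφmeas hAC3 hAC4
    hid πhat hAC1 γhat hγhatG hmax
end

section
/- (Boundedness of the cumulative hazard estimator, Lemma 3.) Almost surely, sup_{n≥1} Λₙ(τ*) < ∞; that is, the sequence (Λₙ(τ*))_{n≥1} is almost surely bounded. -/
/-!
By the strong law of large numbers, the fraction of the first `n` subjects with an observed event
in `[τ*, τ₀]` converges almost surely to `p = ℙ(τ* ≤ Y₁ ≤ τ₀, Δ₁ = 1) > 0`. Each such subject lies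
in the risk set of every `Yᵢ < τ*`, with weight at least `exp (-(C * m))` where `‖β‖ ≤ C` on `B`.
So every nonzero summand of `Λₙ(τ*)` is at most `exp (C * m) / (fraction)`, which converges to
`exp (C * m) / p`; a real sequence that is eventually bounded is bounded.
-/

open MeasureTheory ProbabilityTheory Filter Finset Topology

theorem ae_tendsto_average_indicator {Ω α : Type*} [MeasurableSpace Ω] [MeasurableSpace α]
    {μ : Measure Ω} [IsProbabilityMeasure μ] {W : ℕ → Ω → α} (hW : ∀ i, Measurable (W i))
    (hindep : iIndepFun W μ) (hident : ∀ i, μ.map (W i) = μ.map (W 0))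
    {s : Set α} (hs : MeasurableSet s) :
    ∀ᵐ ω ∂μ, Tendsto (fun n : ℕ => (∑ j ∈ range n, s.indicator (1 : α → ℝ) (W j ω)) / n) atTop
      (𝓝 (μ.real (W 0 ⁻¹' s))) := by
  have hf : Measurable (s.indicator (1 : α → ℝ)) := measurable_const.indicator hs
  have hmean : μ[s.indicator 1 ∘ W 0] = μ.real (W 0 ⁻¹' s) := by
    rw [← integral_indicator_one ((hW 0) hs)]
    rfl
  rw [← hmean]
  exact strong_law_ae_real (fun j => s.indicator 1 ∘ W j)
    ((integrable_const 1).indicator hs |>.comp_measurable (hW 0))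
    (fun i j hij => (hindep.indepFun hij).comp hf hf)
    (fun i => IdentDistrib.comp ⟨(hW i).aemeasurable, (hW 0).aemeasurable, hident i⟩ hf)

theorem exists_forall_le_of_eventually_le_of_tendsto {u v : ℕ → ℝ} {a : ℝ}
    (hv : Tendsto v atTop (𝓝 a)) (huv : ∀ᶠ n in atTop, u n ≤ v n) : ∃ K, ∀ n, u n ≤ K :=
  let ⟨K, hK⟩ := (hv.isBoundedUnder_le.mono_le huv).bddAbove_range
  ⟨K, fun n => hK (Set.mem_range_self n)⟩

theorem sum_div_le_card_div {ι : Type*} {s : Finset ι} {f g : ι → ℝ} {L : ℝ} (hL : 0 < L)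
    (hf : ∀ i ∈ s, f i ∈ Set.Icc (0 : ℝ) 1) (hg : ∀ i ∈ s, f i ≠ 0 → L ≤ g i) :
    ∑ i ∈ s, f i / g i ≤ #s / L := by
  rw [div_eq_mul_one_div, ← nsmul_eq_mul, ← sum_const]
  refine sum_le_sum fun i hi => ?_
  obtain ⟨hf0, hf1⟩ := hf i hi
  rcases hf0.eq_or_lt with h | h
  · rw [← h, zero_div]; positivity
  · have hLg := hg i hi h.ne'
    calc f i / g i ≤ 1 / g i := div_le_div_of_nonneg_right hf1 (hL.le.trans hLg)
      _ ≤ 1 / L := one_div_le_one_div_of_le hL hLg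

theorem exp_neg_mul_le_exp_inner {E : Type*} [NormedAddCommGroup E] [InnerProductSpace ℝ E]
    {β z : E} {C m : ℝ} (hβ : ‖β‖ ≤ C) (hz : ‖z‖ ≤ m) :
    Real.exp (-(C * m)) ≤ Real.exp (inner ℝ β z) := by
  have h : |inner ℝ β z| ≤ C * m :=
    (abs_real_inner_le_norm β z).trans
      (mul_le_mul hβ hz (norm_nonneg z) ((norm_nonneg β).trans hβ))
  exact Real.exp_le_exp.2 (by linarith [(abs_le.1 h).1])

/-- `w j` stands for the weight `exp (β̂ₙᵀ Zⱼ) (Δⱼ + (1 - Δⱼ) ĝₙⱼ)`. -/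
noncomputable def cumulativeHazardEstimator (n : ℕ) (τstar τ₀ : ℝ) (y δ w : ℕ → ℝ) : ℝ :=
  (n : ℝ)⁻¹ * ∑ i ∈ range n, (if y i < τstar then δ i else 0) /
    ((n : ℝ)⁻¹ * ∑ j ∈ range n, (if y i ≤ y j ∧ y j ≤ τ₀ then (1 : ℝ) else 0) * w j)

noncomputable def observedEventFraction (n : ℕ) (τstar τ₀ : ℝ) (y δ : ℕ → ℝ) : ℝ :=
  (∑ j ∈ range n, {j | τstar ≤ y j ∧ y j ≤ τ₀ ∧ δ j = 1}.indicator (1 : ℕ → ℝ) j) / n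

theorem mul_observedEventFraction_le_risk_sum {n i : ℕ} {τstar τ₀ c : ℝ} {y δ w : ℕ → ℝ}
    (hyi : y i < τstar) (hw : ∀ j, 0 ≤ w j) (hwc : ∀ j, δ j = 1 → c ≤ w j) :
    c * observedEventFraction n τstar τ₀ y δ ≤
      (n : ℝ)⁻¹ * ∑ j ∈ range n, (if y i ≤ y j ∧ y j ≤ τ₀ then (1 : ℝ) else 0) * w j := by
  set S := {j | τstar ≤ y j ∧ y j ≤ τ₀ ∧ δ j = 1}
  rw [observedEventFraction, mul_div_assoc', div_eq_inv_mul, mul_sum]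
  refine mul_le_mul_of_nonneg_left (sum_le_sum fun j _ => ?_) (by positivity)
  by_cases hj : j ∈ S
  · rw [Set.indicator_of_mem hj, Pi.one_apply, mul_one]
    obtain ⟨hτj, hjτ, hδj⟩ := hj
    rw [if_pos ⟨hyi.le.trans hτj, hjτ⟩, one_mul]
    exact hwc j hδj
  · rw [Set.indicator_of_notMem hj, mul_zero]
    split_ifs <;> simp [hw j]

theorem cumulativeHazardEstimator_le {n : ℕ} {τstar τ₀ c : ℝ} {y δ w : ℕ → ℝ} (hc : 0 < c)
    (hδ : ∀ i, δ i ∈ Set.Icc (0 : ℝ) 1) (hw : ∀ j, 0 ≤ w j) (hwc : ∀ j, δ j = 1 → c ≤ w j)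
    (hF : 0 < observedEventFraction n τstar τ₀ y δ) :
    cumulativeHazardEstimator n τstar τ₀ y δ w ≤ (c * observedEventFraction n τstar τ₀ y δ)⁻¹ := by
  set F := observedEventFraction n τstar τ₀ y δ
  have hnum : ∀ i, (if y i < τstar then δ i else 0) ∈ Set.Icc (0 : ℝ) 1 := fun i => by
    split_ifs
    exacts [hδ i, ⟨le_rfl, zero_le_one⟩]
  have hden : ∀ i, (if y i < τstar then δ i else 0) ≠ 0 →
      c * F ≤ (n : ℝ)⁻¹ * ∑ j ∈ range n, (if y i ≤ y j ∧ y j ≤ τ₀ then (1 : ℝ) else 0) * w j :=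
    fun i hi => mul_observedEventFraction_le_risk_sum (by by_contra h; exact hi (if_neg h)) hw hwc
  calc cumulativeHazardEstimator n τstar τ₀ y δ w
      ≤ (n : ℝ)⁻¹ * (#(range n) / (c * F)) :=
        mul_le_mul_of_nonneg_left
          (sum_div_le_card_div (mul_pos hc hF) (fun i _ => hnum i) (fun i _ => hden i))
          (by positivity)
    _ ≤ (c * F)⁻¹ := by
        rw [card_range, ← mul_div_assoc, div_eq_mul_inv]
        exact mul_le_of_le_one_left (inv_nonneg.2 (mul_pos hc hF).le)
          (inv_mul_le_one_of_le₀ le_rfl (Nat.cast_nonneg n))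

theorem cumulative_hazard_estimator_bounded_general
    {Ω : Type*} [MeasurableSpace Ω] (μ : Measure Ω) [IsProbabilityMeasure μ]
    {q : ℕ} (m : ℝ)
    (Y Δ : ℕ → Ω → ℝ) (Z : ℕ → Ω → EuclideanSpace ℝ (Fin q))
    (hY : ∀ i, Measurable (Y i)) (hΔ : ∀ i, Measurable (Δ i))
    (hZ : ∀ i, Measurable (Z i))
    (hΔ01 : ∀ i ω, Δ i ω = 0 ∨ Δ i ω = 1)
    (hZbdd : ∀ i, ∀ᵐ ω ∂μ, ‖Z i ω‖ ≤ m)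
    (hindep : iIndepFun
      (fun i ω => (Y i ω, Δ i ω, Z i ω)) μ)
    (hident : ∀ i, Measure.map (fun ω => (Y i ω, Δ i ω, Z i ω)) μ
      = Measure.map (fun ω => (Y 0 ω, Δ 0 ω, Z 0 ω)) μ)
    (B : Set (EuclideanSpace ℝ (Fin q))) (hB : IsCompact B)
    (τstar τ₀ : ℝ)
    (hpos : 0 < μ {ω | τstar ≤ Y 0 ω ∧ Y 0 ω ≤ τ₀ ∧ Δ 0 ω = 1})
    (βhat : ℕ → Ω → EuclideanSpace ℝ (Fin q)) (hβhat : ∀ n ω, βhat n ω ∈ B)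
    (ghat : ℕ → ℕ → Ω → ℝ) (hghat : ∀ n j ω, ghat n j ω ∈ Set.Icc (0 : ℝ) 1) :
    ∀ᵐ ω ∂μ, ∃ K : ℝ, ∀ n : ℕ, 1 ≤ n →
      ((n : ℝ)⁻¹ * ∑ i ∈ Finset.range n,
        (if Y i ω < τstar then Δ i ω else 0) /
          ((n : ℝ)⁻¹ * ∑ j ∈ Finset.range n,
            (if Y i ω ≤ Y j ω ∧ Y j ω ≤ τ₀ then (1 : ℝ) else 0)
              * Real.exp (inner ℝ (βhat n ω) (Z j ω))
              * (Δ j ω + (1 - Δ j ω) * ghat n j ω)))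
      ≤ K := by
  obtain ⟨C, hC⟩ := hB.isBounded.exists_norm_le
  set s : Set (ℝ × ℝ × EuclideanSpace ℝ (Fin q)) := {x | τstar ≤ x.1 ∧ x.1 ≤ τ₀ ∧ x.2.1 = 1}
  have hs : MeasurableSet s :=
    (measurableSet_le measurable_const measurable_fst).inter
      ((measurableSet_le measurable_fst measurable_const).inter
        (measurable_snd.fst (measurableSet_singleton 1)))
  have hp : 0 < μ.real {ω | τstar ≤ Y 0 ω ∧ Y 0 ω ≤ τ₀ ∧ Δ 0 ω = 1} :=
    ENNReal.toReal_pos hpos.ne' (measure_ne_top μ _)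
  filter_upwards [ae_tendsto_average_indicator (fun i => (hY i).prodMk ((hΔ i).prodMk (hZ i)))
    hindep hident hs, ae_all_iff.2 hZbdd] with ω hfreq hZω
  have hfrac : Tendsto (observedEventFraction · τstar τ₀ (Y · ω) (Δ · ω)) atTop
      (𝓝 (μ.real {ω | τstar ≤ Y 0 ω ∧ Y 0 ω ≤ τ₀ ∧ Δ 0 ω = 1})) := hfreq
  have hδ : ∀ i, Δ i ω ∈ Set.Icc (0 : ℝ) 1 := fun i => by
    rcases hΔ01 i ω with h | h <;> simp [h]
  have hw : ∀ n j, 0 ≤ Real.exp (inner ℝ (βhat n ω) (Z j ω)) * (Δ j ω + (1 - Δ j ω) * ghat n j ω) :=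
    fun n j => mul_nonneg (Real.exp_nonneg _)
      (add_nonneg (hδ j).1 (mul_nonneg (sub_nonneg.2 (hδ j).2) (hghat n j ω).1))
  obtain ⟨K, hK⟩ : ∃ K, ∀ n, cumulativeHazardEstimator n τstar τ₀ (Y · ω) (Δ · ω)
      (fun j => Real.exp (inner ℝ (βhat n ω) (Z j ω)) * (Δ j ω + (1 - Δ j ω) * ghat n j ω)) ≤ K :=
    exists_forall_le_of_eventually_le_of_tendsto
      ((hfrac.const_mul (Real.exp (-(C * m)))).inv₀ (by positivity))
      ((hfrac.eventually (lt_mem_nhds hp)).mono fun n hn =>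
        cumulativeHazardEstimator_le (Real.exp_pos _) hδ (hw n)
          (fun j hj => by simpa [hj] using exp_neg_mul_le_exp_inner (hC _ (hβhat n ω)) (hZω j))
          hn)
  refine ⟨K, fun n _ => (hK n).trans_eq' ?_⟩
  simp only [cumulativeHazardEstimator, mul_assoc]

/-- Lemma 3 of the paper: almost surely, `sup_{n ≥ 1} Λₙ(τ*) < ∞`, i.e. the
sequence of cumulative-hazard estimators evaluated at `τ*` is almost surely
bounded.  Here the data `(Yᵢ, Δᵢ, Zᵢ)` are i.i.d., `‖Zᵢ‖ ≤ m` a.s., `β̂ₙ`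
takes values in the compact set `B`, the `ĝ` take values in `[0, 1]`, and
`ℙ(τ* ≤ Y₁ ≤ τ₀, Δ₁ = 1) > 0`.  (In Lean, real division by `0` equals `0`,
which encodes the convention that a summand with zero denominator is `0`.) -/
theorem cumulative_hazard_estimator_bounded
    {Ω : Type*} [MeasurableSpace Ω] (μ : Measure Ω) [IsProbabilityMeasure μ]
    {q : ℕ} (m : ℝ) (hm : 0 < m)
    (Y Δ : ℕ → Ω → ℝ) (Z : ℕ → Ω → EuclideanSpace ℝ (Fin q))
    (hY : ∀ i, Measurable (Y i)) (hΔ : ∀ i, Measurable (Δ i))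
    (hZ : ∀ i, Measurable (Z i))
    (hΔ01 : ∀ i ω, Δ i ω = 0 ∨ Δ i ω = 1)
    (hZbdd : ∀ i, ∀ᵐ ω ∂μ, ‖Z i ω‖ ≤ m)
    (hindep : iIndepFun
      (fun i ω => (Y i ω, Δ i ω, Z i ω)) μ)
    (hident : ∀ i, Measure.map (fun ω => (Y i ω, Δ i ω, Z i ω)) μ
      = Measure.map (fun ω => (Y 0 ω, Δ 0 ω, Z 0 ω)) μ)
    (B : Set (EuclideanSpace ℝ (Fin q))) (hB : IsCompact B)
    (τstar τ₀ : ℝ) (hτ : τstar ≤ τ₀)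
    (hpos : 0 < μ {ω | τstar ≤ Y 0 ω ∧ Y 0 ω ≤ τ₀ ∧ Δ 0 ω = 1})
    (βhat : ℕ → Ω → EuclideanSpace ℝ (Fin q)) (hβhat : ∀ n ω, βhat n ω ∈ B)
    (ghat : ℕ → ℕ → Ω → ℝ) (hghat : ∀ n j ω, ghat n j ω ∈ Set.Icc (0 : ℝ) 1) :
    ∀ᵐ ω ∂μ, ∃ K : ℝ, ∀ n : ℕ, 1 ≤ n →
      ((n : ℝ)⁻¹ * ∑ i ∈ Finset.range n,
        (if Y i ω < τstar then Δ i ω else 0) /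
          ((n : ℝ)⁻¹ * ∑ j ∈ Finset.range n,
            (if Y i ω ≤ Y j ω ∧ Y j ω ≤ τ₀ then (1 : ℝ) else 0)
              * Real.exp (inner ℝ (βhat n ω) (Z j ω))
              * (Δ j ω + (1 - Δ j ω) * ghat n j ω)))
      ≤ K :=
  cumulative_hazard_estimator_bounded_general μ m Y Δ Z hY hΔ hZ hΔ01 hZbdd hindep hident B hB τstar
    τ₀ hpos βhat hβhat ghat hghat
end

section
/- Let B ⊂ ℝ^q be a compact set and β₀ ∈ ℝ^q. Then inf_{β∈B} ℙ((β − β₀)ᵀZ ≥ 0) > 0 and inf_{β∈B} ℙ((β − β₀)ᵀZ ≤ 0) > 0. -/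
/-!
Write `X = ⟪u, Z⟫` for `u ≠ 0`; it is centered with `|X| ≤ M‖u‖ =: K`. Pointwise
`X² ≤ 2K² 𝟙{X ≥ 0} - K X`, and integrating kills the linear term, so
`λ‖u‖² ≤ 𝔼[X²] ≤ 2M²‖u‖² ℙ(X ≥ 0)`. Hence every half-space through the origin has probability at
least `λ / (λ + 2M²)`, uniformly in the direction.
-/

open MeasureTheory

section

variable {Ω : Type*} [MeasurableSpace Ω] {μ : Measure Ω}

lemma sq_le_indicator_sub_mul {x K : ℝ} (hx : |x| ≤ K) :
    x ^ 2 ≤ {y : ℝ | 0 ≤ y}.indicator (fun _ => 2 * K ^ 2) x - K * x := by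
  rcases le_or_gt 0 x with hx0 | hx0
  · rw [Set.indicator_of_mem (show x ∈ {y : ℝ | 0 ≤ y} from hx0)]
    rw [abs_of_nonneg hx0] at hx
    nlinarith
  · rw [Set.indicator_of_notMem (show x ∉ {y : ℝ | 0 ≤ y} from not_le.mpr hx0)]
    rw [abs_of_neg hx0] at hx
    nlinarith

theorem integral_sq_le_of_abs_le_of_integral_eq_zero [IsFiniteMeasure μ] {X : Ω → ℝ} {K : ℝ}
    (hX : Measurable X) (hbdd : ∀ᵐ ω ∂μ, |X ω| ≤ K) (hmean : ∫ ω, X ω ∂μ = 0) :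
    ∫ ω, X ω ^ 2 ∂μ ≤ 2 * K ^ 2 * μ.real {ω | 0 ≤ X ω} := by
  have hXint : Integrable X μ :=
    Integrable.of_bound hX.aestronglyMeasurable K (by simpa only [Real.norm_eq_abs] using hbdd)
  have hS : MeasurableSet {ω | 0 ≤ X ω} := measurableSet_le measurable_const hX
  have hbound_int : Integrable (fun ω => {ω | 0 ≤ X ω}.indicator (fun _ => 2 * K ^ 2) ω
      - K * X ω) μ :=
    ((integrable_const _).indicator hS).sub (hXint.const_mul K)
  calc ∫ ω, X ω ^ 2 ∂μ
      ≤ ∫ ω, ({ω | 0 ≤ X ω}.indicator (fun _ => 2 * K ^ 2) ω - K * X ω) ∂μ := by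
        refine integral_mono_of_nonneg (.of_forall fun ω => sq_nonneg _) hbound_int ?_
        filter_upwards [hbdd] with ω hω
        exact sq_le_indicator_sub_mul hω
    _ = 2 * K ^ 2 * μ.real {ω | 0 ≤ X ω} := by
        rw [integral_sub ((integrable_const _).indicator hS) (hXint.const_mul K),
          integral_indicator_const _ hS, integral_const_mul, hmean, smul_eq_mul]
        ring

theorem div_le_measureReal_inner_nonneg [IsProbabilityMeasure μ] {q : ℕ} {M lam : ℝ}
    (hlam : 0 ≤ lam) {Z : Ω → EuclideanSpace ℝ (Fin q)} (hZ : Measurable Z)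
    (hZbdd : ∀ᵐ ω ∂μ, ‖Z ω‖ ≤ M) (hZmean : ∫ ω, Z ω ∂μ = 0)
    (hZvar : ∀ u : EuclideanSpace ℝ (Fin q), lam * ‖u‖ ^ 2 ≤ ∫ ω, (inner ℝ u (Z ω) : ℝ) ^ 2 ∂μ)
    (u : EuclideanSpace ℝ (Fin q)) :
    lam / (lam + 2 * M ^ 2) ≤ μ.real {ω | 0 ≤ (inner ℝ u (Z ω) : ℝ)} := by
  have hfrac_le_one : lam / (lam + 2 * M ^ 2) ≤ 1 := div_le_one_of_le₀ (by nlinarith) (by positivity)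
  rcases eq_or_ne u 0 with rfl | hu
  · simpa only [inner_zero_left, le_refl, Set.ofPred_true, probReal_univ] using hfrac_le_one
  set p := μ.real {ω | 0 ≤ (inner ℝ u (Z ω) : ℝ)}
  have hZint : Integrable Z μ := .of_bound hZ.aestronglyMeasurable M hZbdd
  have hbdd : ∀ᵐ ω ∂μ, |(inner ℝ u (Z ω) : ℝ)| ≤ M * ‖u‖ := by
    filter_upwards [hZbdd] with ω hω
    calc |(inner ℝ u (Z ω) : ℝ)| ≤ ‖u‖ * ‖Z ω‖ := abs_real_inner_le_norm u (Z ω)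
      _ ≤ M * ‖u‖ := by rw [mul_comm]; gcongr
  have hmean : ∫ ω, (inner ℝ u (Z ω) : ℝ) ∂μ = 0 := by
    rw [integral_inner hZint, hZmean, inner_zero_right]
  have hvar : lam * ‖u‖ ^ 2 ≤ 2 * M ^ 2 * p * ‖u‖ ^ 2 := by
    have := (hZvar u).trans (integral_sq_le_of_abs_le_of_integral_eq_zero
      (measurable_const.inner hZ) hbdd hmean)
    linarith
  have hlam_le : lam ≤ 2 * M ^ 2 * p := le_of_mul_le_mul_right hvar (by positivity)
  rcases (by positivity : 0 ≤ lam + 2 * M ^ 2).eq_or_lt with hzero | hpos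
  · rw [← hzero, div_zero]
    exact measureReal_nonneg
  · rw [div_le_iff₀ hpos]
    nlinarith [mul_nonneg (measureReal_nonneg : 0 ≤ p) hlam]

end

theorem inf_prob_halfspace_pos_general
    {Ω : Type*} [MeasurableSpace Ω] (μ : Measure Ω) [IsProbabilityMeasure μ]
    {q : ℕ} (M lam : ℝ) (hlam : 0 < lam)
    (Z : Ω → EuclideanSpace ℝ (Fin q)) (hZ : Measurable Z)
    (hZbdd : ∀ᵐ ω ∂μ, ‖Z ω‖ ≤ M) (hZmean : ∫ ω, Z ω ∂μ = 0)
    (hZvar : ∀ u : EuclideanSpace ℝ (Fin q),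
      lam * ‖u‖ ^ 2 ≤ ∫ ω, (inner ℝ u (Z ω) : ℝ) ^ 2 ∂μ)
    (B : Set (EuclideanSpace ℝ (Fin q)))
    (β₀ : EuclideanSpace ℝ (Fin q)) :
    (∃ c : ENNReal, 0 < c ∧ ∀ β ∈ B,
        c ≤ μ {ω | 0 ≤ (inner ℝ (β - β₀) (Z ω) : ℝ)}) ∧
    (∃ c : ENNReal, 0 < c ∧ ∀ β ∈ B,
        c ≤ μ {ω | (inner ℝ (β - β₀) (Z ω) : ℝ) ≤ 0}) := by
  have hc : 0 < ENNReal.ofReal (lam / (lam + 2 * M ^ 2)) := ENNReal.ofReal_pos.mpr (by positivity)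
  have halfspace (u : EuclideanSpace ℝ (Fin q)) :
      ENNReal.ofReal (lam / (lam + 2 * M ^ 2)) ≤ μ {ω | 0 ≤ (inner ℝ u (Z ω) : ℝ)} :=
    ENNReal.ofReal_le_of_le_toReal
      (div_le_measureReal_inner_nonneg hlam.le hZ hZbdd hZmean hZvar u)
  refine ⟨⟨_, hc, fun β _ => halfspace (β - β₀)⟩, ⟨_, hc, fun β _ => ?_⟩⟩
  simpa only [inner_neg_left, neg_nonneg] using halfspace (-(β - β₀))

/-- For a bounded, centered random vector `Z` with covariance matrix whose
smallest eigenvalue is at least `λ > 0`, and a compact set `B ⊂ ℝ^q`,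
`inf_{β ∈ B} ℙ((β − β₀)ᵀZ ≥ 0) > 0` and `inf_{β ∈ B} ℙ((β − β₀)ᵀZ ≤ 0) > 0`. -/
theorem inf_prob_halfspace_pos
    {Ω : Type*} [MeasurableSpace Ω] (μ : Measure Ω) [IsProbabilityMeasure μ]
    {q : ℕ} (M lam : ℝ) (hM : 0 < M) (hlam : 0 < lam)
    (Z : Ω → EuclideanSpace ℝ (Fin q)) (hZ : Measurable Z)
    (hZbdd : ∀ᵐ ω ∂μ, ‖Z ω‖ ≤ M)
    (hZmean : ∫ ω, Z ω ∂μ = 0)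
    (hZvar : ∀ u : EuclideanSpace ℝ (Fin q),
      lam * ‖u‖ ^ 2 ≤ ∫ ω, (inner ℝ u (Z ω) : ℝ) ^ 2 ∂μ)
    (B : Set (EuclideanSpace ℝ (Fin q))) (hB : IsCompact B)
    (β₀ : EuclideanSpace ℝ (Fin q)) :
    (∃ c : ENNReal, 0 < c ∧ ∀ β ∈ B,
        c ≤ μ {ω | 0 ≤ (inner ℝ (β - β₀) (Z ω) : ℝ)}) ∧
    (∃ c : ENNReal, 0 < c ∧ ∀ β ∈ B,
        c ≤ μ {ω | (inner ℝ (β - β₀) (Z ω) : ℝ) ≤ 0}) :=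
  inf_prob_halfspace_pos_general μ M lam hlam Z hZ hZbdd hZmean hZvar B β₀
end

section
/- For every u ∈ ℝ^q with ‖u‖ = 1, 𝔼[(uᵀZ)·1{uᵀZ < 0}] ≤ −λ/(2M); in particular, sup_{‖u‖=1} 𝔼[(uᵀZ)·1{uᵀZ < 0}] < 0. -/
/-!
Write `f = ⟪u, Z⟫`. Since `𝔼 f = 0`, the negative part carries half of the absolute moment:
`𝔼[min f 0] = -𝔼|f| / 2`. Since `|f| ≤ M`, `λ ≤ 𝔼 f² ≤ M 𝔼|f|`, so `𝔼[min f 0] ≤ -λ / (2M)`.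
-/

open MeasureTheory

lemma min_zero_eq_half_sub_abs (a : ℝ) : min a 0 = (a - |a|) / 2 := by
  rcases le_total a 0 with h | h <;> simp [h, abs_of_nonpos, abs_of_nonneg]

lemma ite_lt_zero_eq_min_zero (a : ℝ) : (if a < 0 then a else 0) = min a 0 := by
  split_ifs with h
  · exact (min_eq_left h.le).symm
  · exact (min_eq_right (not_lt.mp h)).symm

section RealValued

variable {Ω : Type*} [MeasurableSpace Ω] {μ : Measure Ω} {f : Ω → ℝ}

lemma integral_min_zero_of_integral_eq_zero (hf : Integrable f μ) (hmean : ∫ ω, f ω ∂μ = 0) :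
    ∫ ω, min (f ω) 0 ∂μ = -(∫ ω, |f ω| ∂μ) / 2 := by
  simp_rw [min_zero_eq_half_sub_abs]
  rw [integral_div, integral_sub hf hf.abs, hmean, zero_sub]

lemma integral_sq_le_mul_integral_abs {M : ℝ} (hf : Integrable f μ)
    (hbdd : ∀ᵐ ω ∂μ, |f ω| ≤ M) :
    ∫ ω, f ω ^ 2 ∂μ ≤ M * ∫ ω, |f ω| ∂μ := by
  rw [← integral_const_mul]
  refine integral_mono_of_nonneg (.of_forall fun ω ↦ sq_nonneg _) (hf.abs.const_mul M) ?_
  filter_upwards [hbdd] with ω hω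
  rw [← sq_abs, sq]
  exact mul_le_mul_of_nonneg_right hω (abs_nonneg _)

lemma integral_min_zero_le_neg_integral_sq_div {M : ℝ} (hM : 0 < M) (hf : Integrable f μ)
    (hmean : ∫ ω, f ω ∂μ = 0) (hbdd : ∀ᵐ ω ∂μ, |f ω| ≤ M) :
    ∫ ω, min (f ω) 0 ∂μ ≤ -(∫ ω, f ω ^ 2 ∂μ) / (2 * M) := by
  rw [integral_min_zero_of_integral_eq_zero hf hmean, neg_div, neg_div, neg_le_neg_iff,
    div_le_div_iff₀ (by positivity) two_pos]
  nlinarith [integral_sq_le_mul_integral_abs hf hbdd]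

end RealValued

/-- For every unit vector `u`, `𝔼[(uᵀZ)·1{uᵀZ < 0}] ≤ −λ/(2M)`; in particular
`sup_{‖u‖ = 1} 𝔼[(uᵀZ)·1{uᵀZ < 0}] < 0`. -/
theorem expectation_negative_part_bound
    {Ω : Type*} [MeasurableSpace Ω] (μ : Measure Ω) [IsProbabilityMeasure μ]
    {q : ℕ} (M lam : ℝ) (hM : 0 < M) (hlam : 0 < lam)
    (Z : Ω → EuclideanSpace ℝ (Fin q)) (hZ : Measurable Z)
    (hZbdd : ∀ᵐ ω ∂μ, ‖Z ω‖ ≤ M)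
    (hZmean : ∫ ω, Z ω ∂μ = 0)
    (hZvar : ∀ u : EuclideanSpace ℝ (Fin q),
      lam * ‖u‖ ^ 2 ≤ ∫ ω, (inner ℝ u (Z ω) : ℝ) ^ 2 ∂μ) :
    (∀ u : EuclideanSpace ℝ (Fin q), ‖u‖ = 1 →
      (∫ ω, (if (inner ℝ u (Z ω) : ℝ) < 0 then (inner ℝ u (Z ω) : ℝ) else 0) ∂μ)
        ≤ -(lam / (2 * M))) ∧
    (∃ c : ℝ, c < 0 ∧ ∀ u : EuclideanSpace ℝ (Fin q), ‖u‖ = 1 →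
      (∫ ω, (if (inner ℝ u (Z ω) : ℝ) < 0 then (inner ℝ u (Z ω) : ℝ) else 0) ∂μ)
        ≤ c) := by
  have hZint : Integrable Z μ := .of_bound hZ.aestronglyMeasurable M hZbdd
  have bound : ∀ u : EuclideanSpace ℝ (Fin q), ‖u‖ = 1 →
      (∫ ω, (if (inner ℝ u (Z ω) : ℝ) < 0 then (inner ℝ u (Z ω) : ℝ) else 0) ∂μ)
        ≤ -(lam / (2 * M)) := by
    intro u hu
    have hbdd : ∀ᵐ ω ∂μ, |(inner ℝ u (Z ω) : ℝ)| ≤ M := by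
      filter_upwards [hZbdd] with ω hω
      calc |(inner ℝ u (Z ω) : ℝ)| ≤ ‖u‖ * ‖Z ω‖ := abs_real_inner_le_norm u (Z ω)
        _ ≤ M := by rwa [hu, one_mul]
    have hmean : ∫ ω, (inner ℝ u (Z ω) : ℝ) ∂μ = 0 := by
      rw [integral_inner hZint, hZmean, inner_zero_right]
    have hvar : lam ≤ ∫ ω, (inner ℝ u (Z ω) : ℝ) ^ 2 ∂μ := by simpa [hu] using hZvar u
    simp_rw [ite_lt_zero_eq_min_zero]
    calc _ ≤ -(∫ ω, (inner ℝ u (Z ω) : ℝ) ^ 2 ∂μ) / (2 * M) :=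
          integral_min_zero_le_neg_integral_sq_div hM (hZint.const_inner u) hmean hbdd
      _ ≤ -(lam / (2 * M)) := by rw [neg_div]; gcongr
  exact ⟨bound, -(lam / (2 * M)), neg_lt_zero.mpr (by positivity), bound⟩
end

section
/- For every u ∈ ℝ^q with ‖u‖ = 1, one has ℙ(uᵀZ ≥ 0) ≥ λ/(2M²) and ℙ(uᵀZ ≤ 0) ≥ λ/(2M²). -/
/-!
For a real random variable `X` with `|X| ≤ M`, one has pointwise
`X² + M X ≤ 2 M² 𝟙{X ≥ 0}` (on `{X ≥ 0}` because `X ≤ M`, on `{X < 0}` because `X² ≤ M |X|`).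
Taking expectations with `𝔼 X = 0` gives `𝔼 X² ≤ 2 M² ℙ(X ≥ 0)`. Apply this to `X = ⟪±u, Z⟫`,
whose second moment is at least `λ` and which is bounded by `M` by Cauchy–Schwarz.
-/

open MeasureTheory

theorem sq_add_mul_le_indicator_Ici {x M : ℝ} (hx : |x| ≤ M) :
    x ^ 2 + M * x ≤ 2 * M ^ 2 * (Set.Ici 0).indicator 1 x := by
  rcases le_or_gt 0 x with hx0 | hx0
  · rw [abs_of_nonneg hx0] at hx
    simp only [Set.indicator_of_mem (Set.mem_Ici.2 hx0), Pi.one_apply]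
    nlinarith
  · rw [abs_of_neg hx0] at hx
    simp only [Set.indicator_of_notMem (Set.notMem_Ici.2 hx0)]
    nlinarith

section

variable {Ω : Type*} [MeasurableSpace Ω] {μ : Measure Ω} [IsFiniteMeasure μ]
  {X : Ω → ℝ} {M : ℝ}

theorem integral_sq_add_mul_integral_le (hX : Measurable X) (hb : ∀ᵐ ω ∂μ, |X ω| ≤ M) :
    ∫ ω, X ω ^ 2 ∂μ + M * ∫ ω, X ω ∂μ ≤ 2 * M ^ 2 * μ.real {ω | 0 ≤ X ω} := by
  have hXint : Integrable X μ :=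
    (integrable_const M).mono' hX.aestronglyMeasurable (by simpa only [Real.norm_eq_abs] using hb)
  have hX2int : Integrable (fun ω => X ω ^ 2) μ := by
    refine (integrable_const (M ^ 2)).mono' (hX.pow_const 2).aestronglyMeasurable ?_
    filter_upwards [hb] with ω h
    simpa only [norm_pow, Real.norm_eq_abs] using pow_le_pow_left₀ (abs_nonneg _) h 2
  have hA : MeasurableSet {ω | 0 ≤ X ω} := hX measurableSet_Ici
  calc ∫ ω, X ω ^ 2 ∂μ + M * ∫ ω, X ω ∂μ = ∫ ω, (X ω ^ 2 + M * X ω) ∂μ := by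
        rw [integral_add hX2int (hXint.const_mul M), integral_const_mul]
    _ ≤ ∫ ω, 2 * M ^ 2 * {ω | 0 ≤ X ω}.indicator 1 ω ∂μ := by
        refine integral_mono_ae (hX2int.add (hXint.const_mul M))
          ((integrable_indicator_iff hA).2 (integrable_const 1).integrableOn |>.const_mul _) ?_
        filter_upwards [hb] with ω h
        simpa only [Set.indicator, Set.mem_Ici, Set.mem_ofPred_eq, Pi.one_apply] using
          sq_add_mul_le_indicator_Ici h
    _ = 2 * M ^ 2 * μ.real {ω | 0 ≤ X ω} := by
        rw [integral_const_mul, integral_indicator_one hA]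

theorem ofReal_div_le_measure_nonneg_of_integral_eq_zero {lam : ℝ} (hX : Measurable X)
    (hb : ∀ᵐ ω ∂μ, |X ω| ≤ M) (hmean : ∫ ω, X ω ∂μ = 0) (hvar : lam ≤ ∫ ω, X ω ^ 2 ∂μ) :
    ENNReal.ofReal (lam / (2 * M ^ 2)) ≤ μ {ω | 0 ≤ X ω} := by
  have key := integral_sq_add_mul_integral_le hX hb
  rw [hmean, mul_zero, add_zero, measureReal_def] at key
  rw [ENNReal.ofReal_le_iff_le_toReal (measure_ne_top μ _)]
  exact div_le_of_le_mul₀ (by positivity) ENNReal.toReal_nonneg (by rw [mul_comm]; linarith)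

end

theorem prob_halfspace_lower_bound_general
    {Ω : Type*} [MeasurableSpace Ω] (μ : Measure Ω) [IsProbabilityMeasure μ]
    {q : ℕ} (M lam : ℝ)
    (Z : Ω → EuclideanSpace ℝ (Fin q)) (hZ : Measurable Z)
    (hZbdd : ∀ᵐ ω ∂μ, ‖Z ω‖ ≤ M)
    (hZmean : ∫ ω, Z ω ∂μ = 0)
    (hZvar : ∀ u : EuclideanSpace ℝ (Fin q),
      lam * ‖u‖ ^ 2 ≤ ∫ ω, (inner ℝ u (Z ω) : ℝ) ^ 2 ∂μ) :
    ∀ u : EuclideanSpace ℝ (Fin q), ‖u‖ = 1 →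
      ENNReal.ofReal (lam / (2 * M ^ 2)) ≤ μ {ω | 0 ≤ (inner ℝ u (Z ω) : ℝ)} ∧
      ENNReal.ofReal (lam / (2 * M ^ 2)) ≤ μ {ω | (inner ℝ u (Z ω) : ℝ) ≤ 0} := by
  have hZint : Integrable Z μ :=
    (integrable_const M).mono' hZ.aestronglyMeasurable hZbdd
  have halfspace : ∀ v : EuclideanSpace ℝ (Fin q), ‖v‖ = 1 →
      ENNReal.ofReal (lam / (2 * M ^ 2)) ≤ μ {ω | 0 ≤ (inner ℝ v (Z ω) : ℝ)} := by
    intro v hv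
    refine ofReal_div_le_measure_nonneg_of_integral_eq_zero (measurable_const.inner hZ) ?_
      (by rw [integral_inner hZint, hZmean, inner_zero_right]) (by simpa [hv] using hZvar v)
    filter_upwards [hZbdd] with ω h
    exact (abs_real_inner_le_norm v (Z ω)).trans (by rwa [hv, one_mul])
  intro u hu
  refine ⟨halfspace u hu, ?_⟩
  simpa only [inner_neg_left, neg_nonneg] using halfspace (-u) (by rwa [norm_neg])

/-- For every unit vector `u`, `ℙ(uᵀZ ≥ 0) ≥ λ/(2M²)` and
`ℙ(uᵀZ ≤ 0) ≥ λ/(2M²)`. -/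
theorem prob_halfspace_lower_bound
    {Ω : Type*} [MeasurableSpace Ω] (μ : Measure Ω) [IsProbabilityMeasure μ]
    {q : ℕ} (M lam : ℝ) (hM : 0 < M) (hlam : 0 < lam)
    (Z : Ω → EuclideanSpace ℝ (Fin q)) (hZ : Measurable Z)
    (hZbdd : ∀ᵐ ω ∂μ, ‖Z ω‖ ≤ M)
    (hZmean : ∫ ω, Z ω ∂μ = 0)
    (hZvar : ∀ u : EuclideanSpace ℝ (Fin q),
      lam * ‖u‖ ^ 2 ≤ ∫ ω, (inner ℝ u (Z ω) : ℝ) ^ 2 ∂μ) :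
    ∀ u : EuclideanSpace ℝ (Fin q), ‖u‖ = 1 →
      ENNReal.ofReal (lam / (2 * M ^ 2)) ≤ μ {ω | 0 ≤ (inner ℝ u (Z ω) : ℝ)} ∧
      ENNReal.ofReal (lam / (2 * M ^ 2)) ≤ μ {ω | (inner ℝ u (Z ω) : ℝ) ≤ 0} :=
  prob_halfspace_lower_bound_general μ M lam Z hZ hZbdd hZmean hZvar
end

section
/- Let β, β₀ ∈ ℝ^q and δ > 0 satisfy ‖β − β₀‖ ≥ δ, and set z₀ = δ√λ / 2. Then ℙ((β − β₀)ᵀZ ≥ z₀) + ℙ((β − β₀)ᵀZ ≤ −z₀) ≥ λ/(2M²); in particular, this lower bound is uniform over all β with ‖β − β₀‖ ≥ δ. -/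
open MeasureTheory

/-! Write `X = ⟪β - β₀, Z⟫`, so `|X| ≤ ‖β - β₀‖ M`. Splitting `𝔼[X²]` over the event
`|X| ≥ z₀` gives `λ ‖β - β₀‖² ≤ 𝔼[X²] ≤ z₀² + ‖β - β₀‖² M² ℙ(|X| ≥ z₀)`, and
`z₀² ≤ λ ‖β - β₀‖² / 4`, so `ℙ(|X| ≥ z₀) ≥ 3λ / (4M²)`. -/

section BoundedSecondMoment

variable {Ω : Type*} [MeasurableSpace Ω] {μ : Measure Ω} {X : Ω → ℝ}

lemma integral_sq_le_of_abs_le [IsProbabilityMeasure μ] {K : ℝ} (hX : Measurable X)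
    (hXK : ∀ᵐ ω ∂μ, |X ω| ≤ K) (t : ℝ) :
    ∫ ω, X ω ^ 2 ∂μ ≤ t ^ 2 + K ^ 2 * μ.real {ω | t ≤ |X ω|} := by
  set A := {ω | t ≤ |X ω|}
  have hA : MeasurableSet A := measurableSet_le measurable_const hX.abs
  have hsq_int : Integrable (fun ω => X ω ^ 2) μ := by
    refine (integrable_const (K ^ 2)).mono' (hX.pow_const 2).aestronglyMeasurable ?_
    filter_upwards [hXK] with ω hω
    rw [Real.norm_eq_abs, abs_pow]
    exact pow_le_pow_left₀ (abs_nonneg _) hω 2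
  have hind_int : Integrable (A.indicator fun _ => K ^ 2) μ := (integrable_const _).indicator hA
  calc ∫ ω, X ω ^ 2 ∂μ ≤ ∫ ω, (t ^ 2 + A.indicator (fun _ => K ^ 2) ω) ∂μ := by
        refine integral_mono_ae hsq_int ((integrable_const _).add hind_int) ?_
        filter_upwards [hXK] with ω hω
        rw [← sq_abs]
        by_cases hωA : ω ∈ A
        · rw [Set.indicator_of_mem hωA]
          nlinarith [abs_nonneg (X ω), sq_nonneg t]
        · rw [Set.indicator_of_notMem hωA]
          have : |X ω| < t := lt_of_not_ge hωA
          nlinarith [abs_nonneg (X ω)]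
    _ = t ^ 2 + K ^ 2 * μ.real A := by
        rw [integral_add (integrable_const _) hind_int, integral_const,
          integral_indicator_const _ hA]
        simp [mul_comm]

lemma measure_abs_ge_le_add (t : ℝ) :
    μ {ω | t ≤ |X ω|} ≤ μ {ω | t ≤ X ω} + μ {ω | X ω ≤ -t} := by
  refine (measure_mono fun ω hω => ?_).trans (measure_union_le _ _)
  rcases le_abs'.mp (show t ≤ |X ω| from hω) with h | h
  exacts [Or.inr h, Or.inl h]

end BoundedSecondMoment

theorem prob_tails_lower_bound_general
    {Ω : Type*} [MeasurableSpace Ω] (μ : Measure Ω) [IsProbabilityMeasure μ]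
    {q : ℕ} (M lam : ℝ) (hM : 0 < M) (hlam : 0 < lam)
    (Z : Ω → EuclideanSpace ℝ (Fin q)) (hZ : Measurable Z)
    (hZbdd : ∀ᵐ ω ∂μ, ‖Z ω‖ ≤ M)
    (hZvar : ∀ u : EuclideanSpace ℝ (Fin q),
      lam * ‖u‖ ^ 2 ≤ ∫ ω, (inner ℝ u (Z ω) : ℝ) ^ 2 ∂μ)
    (β β₀ : EuclideanSpace ℝ (Fin q)) (δ : ℝ) (hδ : 0 < δ)
    (hββ₀ : δ ≤ ‖β - β₀‖) :
    ENNReal.ofReal (lam / (2 * M ^ 2)) ≤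
      μ {ω | δ * Real.sqrt lam / 2 ≤ (inner ℝ (β - β₀) (Z ω) : ℝ)} +
      μ {ω | (inner ℝ (β - β₀) (Z ω) : ℝ) ≤ -(δ * Real.sqrt lam / 2)} := by
  set u := β - β₀
  set z₀ := δ * Real.sqrt lam / 2
  have hX : Measurable fun ω => (inner ℝ u (Z ω) : ℝ) :=
    (continuous_const.inner continuous_id).measurable.comp hZ
  have hXbdd : ∀ᵐ ω ∂μ, |(inner ℝ u (Z ω) : ℝ)| ≤ ‖u‖ * M := by
    filter_upwards [hZbdd] with ω hω
    exact (abs_real_inner_le_norm u (Z ω)).trans (by gcongr)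
  have hsecond := (hZvar u).trans (integral_sq_le_of_abs_le hX hXbdd z₀)
  have hz₀ : z₀ ^ 2 ≤ lam * ‖u‖ ^ 2 / 4 := by
    have : δ ^ 2 ≤ ‖u‖ ^ 2 := by gcongr
    rw [div_pow, mul_pow, Real.sq_sqrt hlam.le]
    nlinarith
  have hu : 0 < ‖u‖ ^ 2 := by have := hδ.trans_le hββ₀; positivity
  have htail : lam / (2 * M ^ 2) ≤ μ.real {ω | z₀ ≤ |(inner ℝ u (Z ω) : ℝ)|} := by
    rw [div_le_iff₀ (by positivity)]
    nlinarith [measureReal_nonneg (μ := μ) (s := {ω | z₀ ≤ |(inner ℝ u (Z ω) : ℝ)|})]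
  refine le_trans ?_ (measure_abs_ge_le_add z₀)
  exact (ENNReal.ofReal_le_iff_le_toReal (measure_ne_top _ _)).mpr htail

/-- For `‖β − β₀‖ ≥ δ` and `z₀ = δ√λ/2` one has
`ℙ((β − β₀)ᵀZ ≥ z₀) + ℙ((β − β₀)ᵀZ ≤ −z₀) ≥ λ/(2M²)`; since `β` is universally
quantified, this lower bound is uniform over all `β` with `‖β − β₀‖ ≥ δ`. -/
theorem prob_tails_lower_bound
    {Ω : Type*} [MeasurableSpace Ω] (μ : Measure Ω) [IsProbabilityMeasure μ]
    {q : ℕ} (M lam : ℝ) (hM : 0 < M) (hlam : 0 < lam)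
    (Z : Ω → EuclideanSpace ℝ (Fin q)) (hZ : Measurable Z)
    (hZbdd : ∀ᵐ ω ∂μ, ‖Z ω‖ ≤ M)
    (hZmean : ∫ ω, Z ω ∂μ = 0)
    (hZvar : ∀ u : EuclideanSpace ℝ (Fin q),
      lam * ‖u‖ ^ 2 ≤ ∫ ω, (inner ℝ u (Z ω) : ℝ) ^ 2 ∂μ)
    (β β₀ : EuclideanSpace ℝ (Fin q)) (δ : ℝ) (hδ : 0 < δ)
    (hββ₀ : δ ≤ ‖β - β₀‖) :
    ENNReal.ofReal (lam / (2 * M ^ 2)) ≤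
      μ {ω | δ * Real.sqrt lam / 2 ≤ (inner ℝ (β - β₀) (Z ω) : ℝ)} +
      μ {ω | (inner ℝ (β - β₀) (Z ω) : ℝ) ≤ -(δ * Real.sqrt lam / 2)} :=
  prob_tails_lower_bound_general μ M lam hM hlam Z hZ hZbdd hZvar β β₀ δ hδ hββ₀
end

section
/- Let X be a random vector in ℝ^p with ‖X‖ ≤ m almost surely for a constant m > 0, and suppose the matrix 𝔼[X Xᵀ] is positive definite. Then for every γ₀ ∈ ℝ^p the matrix 𝔼[∇_γ φ(γ₀, X) ∇_γ φ(γ₀, X)ᵀ] = 𝔼[ φ(γ₀, X)² (1 − φ(γ₀, X))² X Xᵀ ] is positive definite; that is, assumption (AN3) holds for the logistic model. -/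
/-!
Since `xᵀ 𝔼[Y Yᵀ] x = 𝔼[(xᵀY)²]`, the second-moment matrix of `Y` is positive definite exactly
when no nonzero linear form of `Y` vanishes almost surely. Writing `w Y Yᵀ = (√w Y)(√w Y)ᵀ`,
this condition is the same for `Y` and for `√w Y` as soon as the weight `w` is almost surely
positive, and a bounded weight keeps all moments integrable. The logistic weight
`φ² (1 - φ)²` takes values in `(0, 1]`.
-/

open MeasureTheory Matrix

section SecondMoment

variable {Ω ι : Type*} [MeasurableSpace Ω] {μ : Measure Ω} {Y : Ω → ι → ℝ}

noncomputable def secondMoment (μ : Measure Ω) (Y : Ω → ι → ℝ) : Matrix ι ι ℝ :=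
  of fun i j => ∫ ω, Y ω i * Y ω j ∂μ

lemma integrable_mul_of_posDef_secondMoment
    (hY_meas : ∀ i, AEStronglyMeasurable (fun ω => Y ω i) μ)
    (h : (secondMoment μ Y).PosDef) (i j : ι) : Integrable (fun ω => Y ω i * Y ω j) μ := by
  have hL2 (k : ι) : MemLp (fun ω => Y ω k) 2 μ := by
    refine (memLp_two_iff_integrable_sq (hY_meas k)).2 ?_
    by_contra hk
    have := h.diag_pos (i := k)
    simp only [secondMoment, of_apply, ← sq, integral_undef hk, lt_irrefl] at this
  exact (hL2 i).integrable_mul (hL2 j)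

variable [Fintype ι]

lemma dotProduct_sq_eq_sum (x y : ι → ℝ) :
    (x ⬝ᵥ y) ^ 2 = ∑ i, ∑ j, x i * ((y i * y j) * x j) := by
  rw [sq, dotProduct, Finset.sum_mul_sum]
  exact Finset.sum_congr rfl fun i _ => Finset.sum_congr rfl fun j _ => by ring

section Integrable

variable (hY : ∀ i j, Integrable (fun ω => Y ω i * Y ω j) μ)
include hY

lemma integrable_dotProduct_sq (x : ι → ℝ) : Integrable (fun ω => (x ⬝ᵥ Y ω) ^ 2) μ := by
  simp only [dotProduct_sq_eq_sum]
  exact integrable_finsetSum _ fun i _ => integrable_finsetSum _ fun j _ =>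
    ((hY i j).mul_const _).const_mul _

lemma dotProduct_secondMoment_mulVec (x : ι → ℝ) :
    x ⬝ᵥ (secondMoment μ Y *ᵥ x) = ∫ ω, (x ⬝ᵥ Y ω) ^ 2 ∂μ := by
  simp only [dotProduct_sq_eq_sum]
  rw [integral_finsetSum _ fun i _ => integrable_finsetSum _ fun j _ =>
    ((hY i j).mul_const _).const_mul _]
  refine Finset.sum_congr rfl fun i _ => ?_
  rw [integral_finsetSum _ fun j _ => ((hY i j).mul_const _).const_mul _, mulVec,
    dotProduct, Finset.mul_sum]
  refine Finset.sum_congr rfl fun j _ => ?_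
  rw [integral_const_mul, integral_mul_const]
  rfl

lemma posDef_secondMoment_iff :
    (secondMoment μ Y).PosDef ↔ ∀ x ≠ 0, ¬ (fun ω => x ⬝ᵥ Y ω) =ᵐ[μ] 0 := by
  have hHerm : (secondMoment μ Y).IsHermitian := by
    ext i j
    simp only [secondMoment, conjTranspose_apply, of_apply, star_trivial, mul_comm]
  simp only [posDef_iff_dotProduct_mulVec, hHerm, true_and, star_trivial,
    dotProduct_secondMoment_mulVec hY]
  refine forall₂_congr fun x _ => ?_
  rw [(integral_nonneg fun ω => sq_nonneg _).lt_iff_ne', ne_eq,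
    integral_eq_zero_iff_of_nonneg (fun ω => sq_nonneg _) (integrable_dotProduct_sq hY x)]
  simp only [Filter.EventuallyEq, Pi.zero_apply, sq_eq_zero_iff]

end Integrable

lemma posDef_weightedSecondMoment {w : Ω → ℝ} {C : ℝ} (hw_meas : AEStronglyMeasurable w μ)
    (hw_pos : ∀ᵐ ω ∂μ, 0 < w ω) (hw_le : ∀ᵐ ω ∂μ, w ω ≤ C)
    (hY_meas : ∀ i, AEStronglyMeasurable (fun ω => Y ω i) μ) (h : (secondMoment μ Y).PosDef) :
    (of fun i j => ∫ ω, w ω * (Y ω i * Y ω j) ∂μ).PosDef := by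
  set Z : Ω → ι → ℝ := fun ω => √(w ω) • Y ω
  have hZ (i j : ι) : (fun ω => Z ω i * Z ω j) =ᵐ[μ] fun ω => w ω * (Y ω i * Y ω j) := by
    filter_upwards [hw_pos] with ω hω
    simp only [Z, Pi.smul_apply, smul_eq_mul]
    rw [mul_mul_mul_comm, Real.mul_self_sqrt hω.le]
  have hZ_int (i j : ι) : Integrable (fun ω => Z ω i * Z ω j) μ := by
    have hw_norm : ∀ᵐ ω ∂μ, ‖w ω‖ ≤ C := by
      filter_upwards [hw_pos, hw_le] with ω hpos hle
      rwa [Real.norm_eq_abs, abs_of_pos hpos]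
    exact ((integrable_mul_of_posDef_secondMoment hY_meas h i j).bdd_mul hw_meas
      hw_norm).congr (hZ i j).symm
  have hmoment : (of fun i j => ∫ ω, w ω * (Y ω i * Y ω j) ∂μ) = secondMoment μ Z := by
    ext i j
    exact (integral_congr_ae (hZ i j)).symm
  rw [hmoment, posDef_secondMoment_iff hZ_int]
  intro x hx hZx
  refine (posDef_secondMoment_iff (integrable_mul_of_posDef_secondMoment hY_meas h)).1
    h x hx ?_
  filter_upwards [hZx, hw_pos] with ω hω hpos
  rw [dotProduct_smul, smul_eq_mul, Pi.zero_apply] at hω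
  exact (mul_eq_zero.1 hω).resolve_left (Real.sqrt_pos.2 hpos).ne'

end SecondMoment

theorem logistic_AN3_general
    {Ω : Type*} [MeasurableSpace Ω] (μ : Measure Ω)
    {p : ℕ}
    (X : Ω → EuclideanSpace ℝ (Fin p)) (hX : Measurable X)
    (hpd : (Matrix.of fun i j => ∫ ω, X ω i * X ω j ∂μ).PosDef)
    (γ₀ : EuclideanSpace ℝ (Fin p)) :
    (Matrix.of fun i j => ∫ ω,
        (1 / (1 + Real.exp (-(inner ℝ γ₀ (X ω) : ℝ)))) ^ 2
          * (1 - 1 / (1 + Real.exp (-(inner ℝ γ₀ (X ω) : ℝ)))) ^ 2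
          * (X ω i * X ω j) ∂μ).PosDef := by
  simp only [one_div, ← Real.sigmoid_def]
  refine posDef_weightedSecondMoment (C := 1) (by fun_prop) (ae_of_all _ fun ω => ?_)
    (ae_of_all _ fun ω => ?_) (fun i => by fun_prop) hpd
  · have := Real.sigmoid_pos (inner ℝ γ₀ (X ω))
    have := sub_pos.2 (Real.sigmoid_lt_one (inner ℝ γ₀ (X ω)))
    positivity
  · have h₀ := Real.sigmoid_nonneg (inner ℝ γ₀ (X ω))
    have h₁ := Real.sigmoid_le_one (inner ℝ γ₀ (X ω))
    exact mul_le_one₀ (pow_le_one₀ h₀ h₁) (by positivity)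
      (pow_le_one₀ (by linarith) (by linarith))

/-- Assumption (AN3) for the logistic model: if `X` is bounded and
`𝔼[X Xᵀ]` is positive definite, then
`𝔼[∇_γ φ(γ₀, X) ∇_γ φ(γ₀, X)ᵀ] = 𝔼[φ(γ₀, X)²(1 − φ(γ₀, X))² X Xᵀ]`
is positive definite, where `φ(γ, x) = 1/(1 + exp(−γᵀx))`. -/
theorem logistic_AN3
    {Ω : Type*} [MeasurableSpace Ω] (μ : Measure Ω) [IsProbabilityMeasure μ]
    {p : ℕ} (m : ℝ) (hm : 0 < m)
    (X : Ω → EuclideanSpace ℝ (Fin p)) (hX : Measurable X)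
    (hbdd : ∀ᵐ ω ∂μ, ‖X ω‖ ≤ m)
    (hpd : (Matrix.of fun i j => ∫ ω, X ω i * X ω j ∂μ).PosDef)
    (γ₀ : EuclideanSpace ℝ (Fin p)) :
    (Matrix.of fun i j => ∫ ω,
        (1 / (1 + Real.exp (-(inner ℝ γ₀ (X ω) : ℝ)))) ^ 2
          * (1 - 1 / (1 + Real.exp (-(inner ℝ γ₀ (X ω) : ℝ)))) ^ 2
          * (X ω i * X ω j) ∂μ).PosDef :=
  logistic_AN3_general μ X hX hpd γ₀
end

section
/- (Identifiability of the Cox proportional hazards component under full-rank covariance.) Let Z be a random vector in ℝ^q with ‖Z‖ ≤ m almost surely for a constant m > 0 and with positive definite covariance matrix (equivalently, Var(uᵀZ) > 0 for every nonzero u ∈ ℝ^q). Let τ* > 0, let Λ₀, Λ̃ : [0, τ*) → [0, ∞) be nondecreasing functions with Λ₀(t) > 0 for every t ∈ (0, τ*), and let β₀, β̃ ∈ ℝ^q. If for ℙ_Z-almost every z one has exp(−Λ̃(t) e^{β̃ᵀz}) = exp(−Λ₀(t) e^{β₀ᵀz}) for all t ∈ [0, τ*), then β̃ = β₀ and Λ̃(t)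 = Λ₀(t) for all t ∈ [0, τ*). -/
/-!
Fix a time `t₀ ∈ (0, τ*)`, where `Λ₀(t₀) > 0`. Taking logarithms in
`Λ̃(t₀) e^{β̃ᵀZ} = Λ₀(t₀) e^{β₀ᵀZ}` shows that `(β̃ - β₀)ᵀZ = log (Λ₀(t₀) / Λ̃(t₀))` almost surely,
so `(β̃ - β₀)ᵀZ` has variance zero and the full-rank condition forces `β̃ = β₀`.
The exponential factors then cancel, giving `Λ̃ = Λ₀`.
-/

open MeasureTheory ProbabilityTheory Real

lemma ProbabilityTheory.variance_fun_const {Ω : Type*} [MeasurableSpace Ω] (μ : Measure Ω)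
    [IsProbabilityMeasure μ] (c : ℝ) : Var[fun _ : Ω ↦ c; μ] = 0 := by
  simpa using variance_add_const (X := (0 : Ω → ℝ)) (μ := μ) aestronglyMeasurable_const c

lemma eq_zero_of_ae_inner_eq_const {Ω E : Type*} [MeasurableSpace Ω] {μ : Measure Ω}
    [IsProbabilityMeasure μ] [NormedAddCommGroup E] [InnerProductSpace ℝ E] {Z : Ω → E}
    (hvar : ∀ u : E, u ≠ 0 → 0 < Var[fun ω ↦ inner ℝ u (Z ω); μ]) {u : E} {c : ℝ}
    (h : ∀ᵐ ω ∂μ, inner ℝ u (Z ω) = c) : u = 0 := by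
  by_contra hu
  have hzero : Var[fun ω ↦ inner ℝ u (Z ω); μ] = 0 := by
    rw [variance_congr h, variance_fun_const]
  exact (hvar u hu).ne' hzero

lemma sub_eq_log_div_of_mul_exp_eq {a b x y : ℝ} (hb : 0 < b) (h : a * exp x = b * exp y) :
    x - y = log (b / a) := by
  have ha : a ≠ 0 := by
    rintro rfl
    exact (mul_pos hb (exp_pos y)).ne' (by simpa using h.symm)
  have hdiv : b / a = exp (x - y) := by
    rw [exp_sub, div_eq_div_iff ha (exp_pos y).ne']
    linarith
  rw [hdiv, log_exp]

theorem cox_identifiability_general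
    {Ω : Type*} [MeasurableSpace Ω] (μ : Measure Ω) [IsProbabilityMeasure μ]
    {q : ℕ}
    (Z : Ω → EuclideanSpace ℝ (Fin q)) (hZ : Measurable Z)
    (hvar : ∀ u : EuclideanSpace ℝ (Fin q), u ≠ 0 →
      0 < variance (fun ω => (inner ℝ u (Z ω) : ℝ)) μ)
    (τstar : ℝ) (hτ : 0 < τstar)
    (Λ₀ Λt : ℝ → ℝ)
    (hΛ₀pos : ∀ t ∈ Set.Ioo (0 : ℝ) τstar, 0 < Λ₀ t)
    (β₀ βt : EuclideanSpace ℝ (Fin q))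
    (heq : ∀ᵐ z ∂(Measure.map Z μ), ∀ t ∈ Set.Ico (0 : ℝ) τstar,
      Real.exp (-(Λt t * Real.exp (inner ℝ βt z)))
        = Real.exp (-(Λ₀ t * Real.exp (inner ℝ β₀ z)))) :
    βt = β₀ ∧ ∀ t ∈ Set.Ico (0 : ℝ) τstar, Λt t = Λ₀ t := by
  have hprod : ∀ᵐ ω ∂μ, ∀ t ∈ Set.Ico (0 : ℝ) τstar,
      Λt t * exp (inner ℝ βt (Z ω)) = Λ₀ t * exp (inner ℝ β₀ (Z ω)) := by
    filter_upwards [ae_of_ae_map hZ.aemeasurable heq] with ω hω t ht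
    exact neg_injective (exp_injective (hω t ht))
  obtain ⟨t₀, ht₀⟩ : (Set.Ioo 0 τstar).Nonempty := Set.nonempty_Ioo.mpr hτ
  have hβ : βt = β₀ := by
    rw [← sub_eq_zero]
    refine eq_zero_of_ae_inner_eq_const hvar (c := log (Λ₀ t₀ / Λt t₀)) ?_
    filter_upwards [hprod] with ω hω
    rw [inner_sub_left]
    exact sub_eq_log_div_of_mul_exp_eq (hΛ₀pos t₀ ht₀) (hω t₀ (Set.Ioo_subset_Ico_self ht₀))
  obtain ⟨ω, hω⟩ := hprod.exists
  rw [hβ] at hω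
  exact ⟨hβ, fun t ht ↦ mul_right_cancel₀ (exp_ne_zero _) (hω t ht)⟩

/-- Identifiability of the Cox proportional hazards component under full-rank
covariance: if `Z` is bounded with positive definite covariance matrix
(equivalently `Var(uᵀZ) > 0` for every nonzero `u`), `Λ₀, Λ̃` are nondecreasing
on `[0, τ*)` with `Λ₀ > 0` on `(0, τ*)`, and the conditional survival functions
`exp(−Λ̃(t) e^{β̃ᵀz})` and `exp(−Λ₀(t) e^{β₀ᵀz})` agree for all `t ∈ [0, τ*)`
for `ℙ_Z`-almost every `z`, then `β̃ = β₀` and `Λ̃ = Λ₀` on `[0, τ*)`. -/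
theorem cox_identifiability
    {Ω : Type*} [MeasurableSpace Ω] (μ : Measure Ω) [IsProbabilityMeasure μ]
    {q : ℕ} (m : ℝ) (hm : 0 < m)
    (Z : Ω → EuclideanSpace ℝ (Fin q)) (hZ : Measurable Z)
    (hbdd : ∀ᵐ ω ∂μ, ‖Z ω‖ ≤ m)
    (hvar : ∀ u : EuclideanSpace ℝ (Fin q), u ≠ 0 →
      0 < variance (fun ω => (inner ℝ u (Z ω) : ℝ)) μ)
    (τstar : ℝ) (hτ : 0 < τstar)
    (Λ₀ Λt : ℝ → ℝ)
    (hΛ₀mono : MonotoneOn Λ₀ (Set.Ico 0 τstar))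
    (hΛtmono : MonotoneOn Λt (Set.Ico 0 τstar))
    (hΛ₀nn : ∀ t ∈ Set.Ico (0 : ℝ) τstar, 0 ≤ Λ₀ t)
    (hΛtnn : ∀ t ∈ Set.Ico (0 : ℝ) τstar, 0 ≤ Λt t)
    (hΛ₀pos : ∀ t ∈ Set.Ioo (0 : ℝ) τstar, 0 < Λ₀ t)
    (β₀ βt : EuclideanSpace ℝ (Fin q))
    (heq : ∀ᵐ z ∂(Measure.map Z μ), ∀ t ∈ Set.Ico (0 : ℝ) τstar,
      Real.exp (-(Λt t * Real.exp (inner ℝ βt z)))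
        = Real.exp (-(Λ₀ t * Real.exp (inner ℝ β₀ z)))) :
    βt = β₀ ∧ ∀ t ∈ Set.Ico (0 : ℝ) τstar, Λt t = Λ₀ t :=
  cox_identifiability_general μ Z hZ hvar τstar hτ Λ₀ Λt hΛ₀pos β₀ βt heq
end
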